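/- arXiv:1903.01952 — 6 statements merged into one kernel-verified Lean document; each statement's English description precedes it below -/
import Mathlib

section
/- Let A be a C*-algebra acting non-degenerately on a Hilbert space H, and let (x_n) and (y_n) be sequences in the strong closure of A such that the partial sums of ∑ x_n x_n* and of ∑ y_n y_n* are uniformly bounded in norm. Then the series ∑ x_n y_n* converges in the strong operator topology on B(H). -/
open Filter Topology

noncomputable section

variable {H : Type*} [NormedAddCommGroup H] [InnerProductSpace ℂ H] [CompleteSpace H]

local notation "⟪" a ", " b "⟫" => @inner ℂ _ _ a b

lemma aux_sq_sum {a : ℕ → H →L[ℂ] H} {C : ℝ}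
    (hb : ∀ N, ‖∑ n ∈ Finset.range N, a n * star (a n)‖ ≤ C) (η : H) (F : Finset ℕ) :
    ∑ n ∈ F, ‖(star (a n)) η‖^2 ≤ C * ‖η‖^2 := by
  obtain ⟨N, hN⟩ := F.exists_nat_subset_range
  have h1 : ∑ n ∈ F, ‖(star (a n)) η‖^2 ≤ ∑ n ∈ Finset.range N, ‖(star (a n)) η‖^2 :=
    Finset.sum_le_sum_of_subset_of_nonneg hN (by intros; positivity)
  have h2 : ∑ n ∈ Finset.range N, ‖(star (a n)) η‖^2
      = RCLike.re ⟪(∑ n ∈ Finset.range N, a n * star (a n)) η, η⟫ := by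
    rw [ContinuousLinearMap.sum_apply, sum_inner, map_sum]
    refine Finset.sum_congr rfl fun n _ => ?_
    rw [ContinuousLinearMap.mul_apply, ContinuousLinearMap.star_eq_adjoint,
      ← ContinuousLinearMap.adjoint_inner_right, inner_self_eq_norm_sq]
  have h3 : RCLike.re ⟪(∑ n ∈ Finset.range N, a n * star (a n)) η, η⟫ ≤ C * ‖η‖^2 := by
    have := norm_inner_le_norm (𝕜 := ℂ) ((∑ n ∈ Finset.range N, a n * star (a n)) η) η
    have h4 : RCLike.re ⟪(∑ n ∈ Finset.range N, a n * star (a n)) η, η⟫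
        ≤ ‖⟪(∑ n ∈ Finset.range N, a n * star (a n)) η, η⟫‖ := RCLike.re_le_norm _
    have h5 : ‖(∑ n ∈ Finset.range N, a n * star (a n)) η‖ ≤ C * ‖η‖ :=
      le_trans ((∑ n ∈ Finset.range N, a n * star (a n)).le_opNorm η)
        (mul_le_mul_of_nonneg_right (hb N) (norm_nonneg η))
    calc RCLike.re ⟪(∑ n ∈ Finset.range N, a n * star (a n)) η, η⟫
        ≤ ‖(∑ n ∈ Finset.range N, a n * star (a n)) η‖ * ‖η‖ := h4.trans this
      _ ≤ (C * ‖η‖) * ‖η‖ := mul_le_mul_of_nonneg_right h5 (norm_nonneg η)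
      _ = C * ‖η‖^2 := by ring
  linarith


lemma aux_key {x y : ℕ → H →L[ℂ] H} {Cx : ℝ}
    (hxb : ∀ N, ‖∑ n ∈ Finset.range N, x n * star (x n)‖ ≤ Cx)
    (ξ : H) (F : Finset ℕ) :
    ‖∑ n ∈ F, (x n) ((star (y n)) ξ)‖^2 ≤ Cx * ∑ n ∈ F, ‖(star (y n)) ξ‖^2 := by
  set v := ∑ n ∈ F, (x n) ((star (y n)) ξ) with hv
  set Sy := ∑ n ∈ F, ‖(star (y n)) ξ‖^2 with hSy
  have hCx : 0 ≤ Cx := le_trans (norm_nonneg _) (hxb 0)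
  have hSy0 : 0 ≤ Sy := Finset.sum_nonneg fun n _ => by positivity
  have h1 : ‖v‖^2 = RCLike.re ⟪v, v⟫ := (inner_self_eq_norm_sq v).symm
  have h2 : RCLike.re ⟪v, v⟫ ≤ ∑ n ∈ F, ‖(star (y n)) ξ‖ * ‖(star (x n)) v‖ := by
    nth_rewrite 1 [hv]
    rw [sum_inner, map_sum]
    refine Finset.sum_le_sum fun n _ => ?_
    rw [show ⟪(x n) ((star (y n)) ξ), v⟫ = ⟪(star (y n)) ξ, (star (x n)) v⟫ by
      rw [ContinuousLinearMap.star_eq_adjoint (x n), ContinuousLinearMap.adjoint_inner_right]]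
    exact (RCLike.re_le_norm _).trans (norm_inner_le_norm _ _)
  have h3 : ∑ n ∈ F, ‖(star (y n)) ξ‖ * ‖(star (x n)) v‖
      ≤ Real.sqrt Sy * Real.sqrt (∑ n ∈ F, ‖(star (x n)) v‖^2) := by
    have hcs := Finset.sum_mul_sq_le_sq_mul_sq F (fun n => ‖(star (y n)) ξ‖)
      (fun n => ‖(star (x n)) v‖)
    have h0 : 0 ≤ ∑ n ∈ F, ‖(star (y n)) ξ‖ * ‖(star (x n)) v‖ :=
      Finset.sum_nonneg fun n _ => by positivity
    calc ∑ n ∈ F, ‖(star (y n)) ξ‖ * ‖(star (x n)) v‖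
        = Real.sqrt ((∑ n ∈ F, ‖(star (y n)) ξ‖ * ‖(star (x n)) v‖)^2) :=
          (Real.sqrt_sq h0).symm
      _ ≤ Real.sqrt (Sy * ∑ n ∈ F, ‖(star (x n)) v‖^2) := Real.sqrt_le_sqrt hcs
      _ = _ := Real.sqrt_mul hSy0 _
  have h4 : Real.sqrt (∑ n ∈ F, ‖(star (x n)) v‖^2) ≤ Real.sqrt Cx * ‖v‖ := by
    calc Real.sqrt (∑ n ∈ F, ‖(star (x n)) v‖^2)
        ≤ Real.sqrt (Cx * ‖v‖^2) := Real.sqrt_le_sqrt (aux_sq_sum hxb v F)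
      _ = Real.sqrt Cx * ‖v‖ := by
          rw [Real.sqrt_mul hCx, Real.sqrt_sq (norm_nonneg v)]
  set K := Real.sqrt (Cx * Sy) with hK
  have hKnn : 0 ≤ K := Real.sqrt_nonneg _
  have hK2 : K^2 = Cx * Sy := Real.sq_sqrt (by positivity)
  have h5 : ‖v‖^2 ≤ K * ‖v‖ := by
    have : Real.sqrt Sy * (Real.sqrt Cx * ‖v‖) = K * ‖v‖ := by
      rw [hK, Real.sqrt_mul hCx]; ring
    calc ‖v‖^2 = RCLike.re ⟪v, v⟫ := h1
      _ ≤ Real.sqrt Sy * Real.sqrt (∑ n ∈ F, ‖(star (x n)) v‖^2) := h2.trans h3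
      _ ≤ Real.sqrt Sy * (Real.sqrt Cx * ‖v‖) :=
          mul_le_mul_of_nonneg_left h4 (Real.sqrt_nonneg _)
      _ = K * ‖v‖ := this
  nlinarith [sq_nonneg (‖v‖ - K), norm_nonneg v]


lemma aux_summable {x y : ℕ → H →L[ℂ] H} {Cx Cy : ℝ}
    (hxb : ∀ N, ‖∑ n ∈ Finset.range N, x n * star (x n)‖ ≤ Cx)
    (hyb : ∀ N, ‖∑ n ∈ Finset.range N, y n * star (y n)‖ ≤ Cy)
    (ξ : H) : Summable (fun n => (x n) ((star (y n)) ξ)) := by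
  have hCx : 0 ≤ Cx := le_trans (norm_nonneg _) (hxb 0)
  have hsq : Summable (fun n => ‖(star (y n)) ξ‖^2) :=
    summable_of_sum_range_le (fun n => by positivity)
      (fun N => aux_sq_sum hyb ξ (Finset.range N))
  rw [summable_iff_vanishing]
  intro e he
  obtain ⟨ε, hε, hball⟩ := Metric.mem_nhds_iff.mp he
  set δ : ℝ := ε^2 / (Cx + 1) with hδ
  have hδ0 : 0 < δ := by positivity
  obtain ⟨s, hs⟩ := summable_iff_vanishing.mp hsq (Metric.ball 0 δ) (Metric.ball_mem_nhds 0 hδ0)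
  refine ⟨s, fun t ht => ?_⟩
  have h1 : ∑ n ∈ t, ‖(star (y n)) ξ‖^2 < δ := by
    have := hs t ht
    rw [Metric.mem_ball, Real.dist_eq, sub_zero] at this
    exact (le_abs_self _).trans_lt this
  have h2 := aux_key hxb (y := y) ξ t
  have h3 : ‖∑ n ∈ t, (x n) ((star (y n)) ξ)‖^2 < ε^2 := by
    calc ‖∑ n ∈ t, (x n) ((star (y n)) ξ)‖^2 ≤ Cx * ∑ n ∈ t, ‖(star (y n)) ξ‖^2 := h2
      _ ≤ Cx * δ := mul_le_mul_of_nonneg_left h1.le hCx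
      _ < (Cx + 1) * δ := by nlinarith
      _ = ε^2 := by rw [hδ]; field_simp [(by linarith : Cx + 1 ≠ 0)]
  apply hball
  rw [Metric.mem_ball, dist_zero_right]
  nlinarith [norm_nonneg (∑ n ∈ t, (x n) ((star (y n)) ξ))]

theorem stmt_0' (x y : ℕ → H →L[ℂ] H)
    (hxb : ∃ C : ℝ, ∀ N : ℕ, ‖∑ n ∈ Finset.range N, x n * star (x n)‖ ≤ C)
    (hyb : ∃ C : ℝ, ∀ N : ℕ, ‖∑ n ∈ Finset.range N, y n * star (y n)‖ ≤ C) :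
    ∃ T : H →L[ℂ] H, ∀ ξ : H,
      Tendsto (fun N : ℕ => (∑ n ∈ Finset.range N, x n * star (y n)) ξ) atTop (𝓝 (T ξ)) := by
  obtain ⟨Cx, hxb⟩ := hxb
  obtain ⟨Cy, hyb⟩ := hyb
  have hCx : 0 ≤ Cx := le_trans (norm_nonneg _) (hxb 0)
  have hCy : 0 ≤ Cy := le_trans (norm_nonneg _) (hyb 0)
  have hsum : ∀ ξ : H, Summable (fun n => (x n) ((star (y n)) ξ)) :=
    fun ξ => aux_summable hxb hyb ξ
  let T₀ : H →ₗ[ℂ] H :=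
    { toFun := fun ξ => ∑' n, (x n) ((star (y n)) ξ)
      map_add' := fun ξ η => by
        simp only [map_add]
        exact Summable.tsum_add (hsum ξ) (hsum η)
      map_smul' := fun c ξ => by
        simp only [map_smul, RingHom.id_apply]
        exact Summable.tsum_const_smul c (hsum ξ) }
  have hbound : ∀ ξ : H, ‖T₀ ξ‖ ≤ Real.sqrt (Cx * Cy) * ‖ξ‖ := by
    intro ξ
    have h := (hsum ξ).hasSum
    refine le_of_tendsto' h.norm (fun F => ?_)
    have h2 : ‖∑ n ∈ F, (x n) ((star (y n)) ξ)‖^2 ≤ Cx * (Cy * ‖ξ‖^2) :=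
      (aux_key hxb ξ F).trans
        (mul_le_mul_of_nonneg_left (aux_sq_sum hyb ξ F) hCx)
    have h3 : (Real.sqrt (Cx * Cy) * ‖ξ‖)^2 = Cx * (Cy * ‖ξ‖^2) := by
      rw [mul_pow, Real.sq_sqrt (by positivity)]; ring
    nlinarith [norm_nonneg (∑ n ∈ F, (x n) ((star (y n)) ξ)), Real.sqrt_nonneg (Cx * Cy),
      norm_nonneg ξ, mul_nonneg (Real.sqrt_nonneg (Cx * Cy)) (norm_nonneg ξ)]
  refine ⟨T₀.mkContinuous (Real.sqrt (Cx * Cy)) hbound, fun ξ => ?_⟩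
  have h := (hsum ξ).hasSum.tendsto_sum_nat
  simpa only [ContinuousLinearMap.sum_apply, ContinuousLinearMap.mul_apply,
    LinearMap.mkContinuous_apply, T₀, LinearMap.coe_mk, AddHom.coe_mk] using h


/-- The closure of a set of operators in the strong operator topology
(the topology of pointwise convergence on `H`). -/
def strongClosure (A : Set (H →L[ℂ] H)) : Set (H →L[ℂ] H) :=
  {T | (⇑T : H → H) ∈ closure ((fun a : H →L[ℂ] H => (⇑a : H → H)) '' A)}

/-- A set of operators acts non-degenerately on `H` if the span of its total range is dense. -/
def Nondegenerate (A : Set (H →L[ℂ] H)) : Prop :=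
  Dense (↑(Submodule.span ℂ {ξ : H | ∃ a ∈ A, ∃ η : H, a η = ξ}) : Set H)

/-- If `A` is a C*-algebra acting non-degenerately on `H` and `(x_n)`, `(y_n)`
are sequences in the strong closure of `A` whose partial sums `∑ xₙxₙ*`, `∑ yₙyₙ*` are
uniformly norm-bounded, then `∑ xₙyₙ*` converges in the strong operator topology. -/
theorem stmt_0 (A : StarSubalgebra ℂ (H →L[ℂ] H))
    (hA : IsClosed (A : Set (H →L[ℂ] H)))
    (hnd : Nondegenerate (A : Set (H →L[ℂ] H)))
    (x y : ℕ → H →L[ℂ] H)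
    (hx : ∀ n, x n ∈ strongClosure (A : Set (H →L[ℂ] H)))
    (hy : ∀ n, y n ∈ strongClosure (A : Set (H →L[ℂ] H)))
    (hxb : ∃ C : ℝ, ∀ N : ℕ, ‖∑ n ∈ Finset.range N, x n * star (x n)‖ ≤ C)
    (hyb : ∃ C : ℝ, ∀ N : ℕ, ‖∑ n ∈ Finset.range N, y n * star (y n)‖ ≤ C) :
    ∃ T : H →L[ℂ] H, ∀ ξ : H,
      Tendsto (fun N : ℕ => (∑ n ∈ Finset.range N, x n * star (y n)) ξ) atTop (𝓝 (T ξ)) := by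
  exact stmt_0' x y hxb hyb
end
end

section
/- Let A ⊆ B(H) be a C*-algebra acting non-degenerately on H and let (t_n) be a sequence in LM(A) (left multipliers of A). Then the series ∑ a_n t_n* converges in norm in A for every (a_n) ∈ ℓ²(A) if and only if the sequence of partial sums ∑_{n=1}^N t_n t_n* is bounded in norm. -/
open Filter Topology

noncomputable section

variable {H : Type*} [NormedAddCommGroup H] [InnerProductSpace ℂ H] [CompleteSpace H]

/-- Left multipliers of `A` inside `B(H)`: operators `t` with `tA ⊆ A`. -/
def LeftMult (A : Set (H →L[ℂ] H)) : Set (H →L[ℂ] H) :=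
  {t | ∀ a ∈ A, t * a ∈ A}

/-- Membership in the standard Hilbert module `ℓ²(A)`:
all entries lie in `A` and `∑ aₙaₙ*` converges in norm. -/
def MemL2 (A : Set (H →L[ℂ] H)) (a : ℕ → H →L[ℂ] H) : Prop :=
  (∀ n, a n ∈ A) ∧
    ∃ s : H →L[ℂ] H,
      Tendsto (fun N : ℕ => ∑ n ∈ Finset.range N, a n * star (a n)) atTop (𝓝 s)

local notation "⟪" x ", " y "⟫" => @inner ℂ _ _ x y

lemma my_inner_star (a : H →L[ℂ] H) (x y : H) : ⟪a x, y⟫ = ⟪x, (star a) y⟫ := by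
  rw [ContinuousLinearMap.star_eq_adjoint]
  exact (ContinuousLinearMap.adjoint_inner_right a x y).symm

lemma my_quad_bound (F : Finset ℕ) (v : ℕ → H →L[ℂ] H) (ξ : H) :
    ∑ n ∈ F, ‖(star (v n)) ξ‖ ^ 2 ≤ ‖∑ n ∈ F, v n * star (v n)‖ * ‖ξ‖ ^ 2 := by
  have h1 : ∑ n ∈ F, ‖(star (v n)) ξ‖ ^ 2
      = RCLike.re ⟪(∑ n ∈ F, v n * star (v n)) ξ, ξ⟫ := by
    rw [ContinuousLinearMap.sum_apply, sum_inner, map_sum]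
    refine (Finset.sum_congr rfl fun n _ => ?_).symm
    rw [ContinuousLinearMap.mul_apply, my_inner_star]
    exact inner_self_eq_norm_sq _
  rw [h1]
  calc RCLike.re ⟪(∑ n ∈ F, v n * star (v n)) ξ, ξ⟫
      ≤ ‖⟪(∑ n ∈ F, v n * star (v n)) ξ, ξ⟫‖ := RCLike.re_le_norm _
    _ ≤ ‖(∑ n ∈ F, v n * star (v n)) ξ‖ * ‖ξ‖ := norm_inner_le_norm _ _
    _ ≤ (‖∑ n ∈ F, v n * star (v n)‖ * ‖ξ‖) * ‖ξ‖ :=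
        mul_le_mul_of_nonneg_right ((∑ n ∈ F, v n * star (v n)).le_opNorm ξ) (norm_nonneg ξ)
    _ = ‖∑ n ∈ F, v n * star (v n)‖ * ‖ξ‖ ^ 2 := by ring

lemma my_cs_bound (F : Finset ℕ) (b t : ℕ → H →L[ℂ] H) :
    ‖∑ n ∈ F, b n * star (t n)‖
      ≤ Real.sqrt (‖∑ n ∈ F, b n * star (b n)‖ * ‖∑ n ∈ F, t n * star (t n)‖) := by
  set S := ∑ n ∈ F, b n * star (t n) with hS
  set P := ‖∑ n ∈ F, b n * star (b n)‖ with hP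
  set T := ‖∑ n ∈ F, t n * star (t n)‖ with hT
  have hP0 : 0 ≤ P := norm_nonneg _
  have hT0 : 0 ≤ T := norm_nonneg _
  refine ContinuousLinearMap.opNorm_le_bound _ (Real.sqrt_nonneg _) fun ξ => ?_
  set η := S ξ with hη
  have key : ‖η‖ ^ 2 ≤ (Real.sqrt (T * ‖ξ‖ ^ 2)) * Real.sqrt (P * ‖η‖ ^ 2) := by
    have h1 : ‖η‖ ^ 2 = RCLike.re ⟪S ξ, η⟫ := (inner_self_eq_norm_sq _).symm
    have h2 : RCLike.re ⟪S ξ, η⟫ = ∑ n ∈ F, RCLike.re ⟪(star (t n)) ξ, (star (b n)) η⟫ := by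
      rw [hS, ContinuousLinearMap.sum_apply, sum_inner, map_sum]
      exact Finset.sum_congr rfl fun n _ => by
        rw [ContinuousLinearMap.mul_apply, my_inner_star]
    have h3 : ∑ n ∈ F, RCLike.re ⟪(star (t n)) ξ, (star (b n)) η⟫
        ≤ ∑ n ∈ F, ‖(star (t n)) ξ‖ * ‖(star (b n)) η‖ := by
      refine Finset.sum_le_sum fun n _ => ?_
      calc RCLike.re ⟪(star (t n)) ξ, (star (b n)) η⟫
          ≤ ‖⟪(star (t n)) ξ, (star (b n)) η⟫‖ := RCLike.re_le_norm _
        _ ≤ _ := norm_inner_le_norm _ _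
    have h4 : ∑ n ∈ F, ‖(star (t n)) ξ‖ * ‖(star (b n)) η‖
        ≤ Real.sqrt ((∑ n ∈ F, ‖(star (t n)) ξ‖ ^ 2) * (∑ n ∈ F, ‖(star (b n)) η‖ ^ 2)) := by
      exact Real.le_sqrt_of_sq_le (Finset.sum_mul_sq_le_sq_mul_sq F _ _)
    have h5 : Real.sqrt ((∑ n ∈ F, ‖(star (t n)) ξ‖ ^ 2) * (∑ n ∈ F, ‖(star (b n)) η‖ ^ 2))
        ≤ Real.sqrt ((T * ‖ξ‖ ^ 2) * (P * ‖η‖ ^ 2)) := by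
      apply Real.sqrt_le_sqrt
      have q1 := my_quad_bound F t ξ
      have q2 := my_quad_bound F b η
      rw [← hT] at q1; rw [← hP] at q2
      exact mul_le_mul q1 q2 (Finset.sum_nonneg fun n _ => sq_nonneg _)
        (mul_nonneg hT0 (sq_nonneg _))
    calc ‖η‖ ^ 2 = RCLike.re ⟪S ξ, η⟫ := h1
      _ = _ := h2
      _ ≤ _ := h3
      _ ≤ _ := h4
      _ ≤ _ := h5
      _ = (Real.sqrt (T * ‖ξ‖ ^ 2)) * Real.sqrt (P * ‖η‖ ^ 2) := by
          rw [← Real.sqrt_mul (mul_nonneg hT0 (sq_nonneg _))]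
  have hsq : Real.sqrt (T * ‖ξ‖ ^ 2) = Real.sqrt T * ‖ξ‖ := by
    rw [Real.sqrt_mul hT0, Real.sqrt_sq (norm_nonneg _)]
  have hsq' : Real.sqrt (P * ‖η‖ ^ 2) = Real.sqrt P * ‖η‖ := by
    rw [Real.sqrt_mul hP0, Real.sqrt_sq (norm_nonneg _)]
  rw [hsq, hsq'] at key
  have hPT : Real.sqrt (P * T) = Real.sqrt P * Real.sqrt T := Real.sqrt_mul hP0 _
  rcases eq_or_lt_of_le (norm_nonneg η) with h0 | h0
  · rw [← h0]
    positivity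
  · have : ‖η‖ * ‖η‖ ≤ (Real.sqrt P * Real.sqrt T * ‖ξ‖) * ‖η‖ := by nlinarith [key]
    have := le_of_mul_le_mul_right this h0
    rw [hPT]; linarith

lemma my_sum_nonneg (t : ℕ → H →L[ℂ] H) (F : Finset ℕ) :
    (0 : H →L[ℂ] H) ≤ ∑ n ∈ F, t n * star (t n) :=
  Finset.sum_nonneg fun n _ => mul_star_self_nonneg _

lemma my_norm_mono {x y : H →L[ℂ] H} (hx : 0 ≤ x) (h : x ≤ y) : ‖x‖ ≤ ‖y‖ :=
  CStarAlgebra.norm_le_norm_of_nonneg_of_le hx h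

lemma my_sum_subset (t : ℕ → H →L[ℂ] H) {F G : Finset ℕ} (h : F ⊆ G) :
    ∑ n ∈ F, t n * star (t n) ≤ ∑ n ∈ G, t n * star (t n) :=
  Finset.sum_le_sum_of_subset_of_nonneg h fun n _ _ => mul_star_self_nonneg _

lemma my_partial_norm_mono (t : ℕ → H →L[ℂ] H) {m n : ℕ} (h : m ≤ n) :
    ‖∑ k ∈ Finset.range m, t k * star (t k)‖ ≤ ‖∑ k ∈ Finset.range n, t k * star (t k)‖ :=
  my_norm_mono (my_sum_nonneg t _) (my_sum_subset t (Finset.range_subset_range.2 h))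

lemma my_easy (t : ℕ → H →L[ℂ] H) (C : ℝ)
    (hC : ∀ N : ℕ, ‖∑ n ∈ Finset.range N, t n * star (t n)‖ ≤ C)
    (a : ℕ → H →L[ℂ] H)
    (ha : ∃ p : H →L[ℂ] H,
      Tendsto (fun N : ℕ => ∑ n ∈ Finset.range N, a n * star (a n)) atTop (𝓝 p)) :
    ∃ s : H →L[ℂ] H,
      Tendsto (fun N : ℕ => ∑ n ∈ Finset.range N, a n * star (t n)) atTop (𝓝 s) := by
  obtain ⟨p, hp⟩ := ha
  have hC0 : (0:ℝ) ≤ C := le_trans (by simp) (hC 0)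
  have h2C : (0:ℝ) < 2 * C + 1 := by linarith
  apply cauchySeq_tendsto_of_complete
  rw [Metric.cauchySeq_iff]
  intro ε hε
  have hPc := hp.cauchySeq
  rw [Metric.cauchySeq_iff] at hPc
  obtain ⟨N₀, hN₀⟩ := hPc (ε ^ 2 / (2 * C + 1)) (by positivity)
  refine ⟨N₀, fun m hm n hn => ?_⟩
  have key : ∀ m n : ℕ, N₀ ≤ m → m ≤ n →
      dist (∑ k ∈ Finset.range n, a k * star (t k))
        (∑ k ∈ Finset.range m, a k * star (t k)) < ε := by
    intro m n hm hmn
    rw [dist_eq_norm]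
    have e1 : ∑ k ∈ Finset.range n, a k * star (t k) - ∑ k ∈ Finset.range m, a k * star (t k)
        = ∑ k ∈ Finset.Ico m n, a k * star (t k) := (Finset.sum_Ico_eq_sub _ hmn).symm
    rw [e1]
    have hcs := my_cs_bound (Finset.Ico m n) a t
    have hA : ‖∑ k ∈ Finset.Ico m n, a k * star (a k)‖ < ε ^ 2 / (2 * C + 1) := by
      have e2 : ∑ k ∈ Finset.Ico m n, a k * star (a k)
          = ∑ k ∈ Finset.range n, a k * star (a k) - ∑ k ∈ Finset.range m, a k * star (a k) :=
        Finset.sum_Ico_eq_sub _ hmn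
      rw [e2, ← dist_eq_norm]
      exact hN₀ n (le_trans hm hmn) m hm
    have hT : ‖∑ k ∈ Finset.Ico m n, t k * star (t k)‖ ≤ 2 * C + 1 := by
      have e3 : ∑ k ∈ Finset.Ico m n, t k * star (t k)
          = ∑ k ∈ Finset.range n, t k * star (t k) - ∑ k ∈ Finset.range m, t k * star (t k) :=
        Finset.sum_Ico_eq_sub _ hmn
      rw [e3]
      calc ‖_ - _‖ ≤ ‖∑ k ∈ Finset.range n, t k * star (t k)‖
            + ‖∑ k ∈ Finset.range m, t k * star (t k)‖ := norm_sub_le _ _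
        _ ≤ 2 * C + 1 := by have := hC n; have := hC m; linarith
    refine lt_of_le_of_lt hcs ?_
    have hprod : ‖∑ k ∈ Finset.Ico m n, a k * star (a k)‖
        * ‖∑ k ∈ Finset.Ico m n, t k * star (t k)‖ < ε ^ 2 := by
      calc _ ≤ ‖∑ k ∈ Finset.Ico m n, a k * star (a k)‖ * (2 * C + 1) :=
            mul_le_mul_of_nonneg_left hT (norm_nonneg _)
        _ < (ε ^ 2 / (2 * C + 1)) * (2 * C + 1) := by
            exact mul_lt_mul_of_pos_right hA h2C
        _ = ε ^ 2 := by field_simp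
    calc Real.sqrt _ < Real.sqrt (ε ^ 2) :=
          Real.sqrt_lt_sqrt (mul_nonneg (norm_nonneg _) (norm_nonneg _)) hprod
      _ = ε := Real.sqrt_sq hε.le
  rcases le_total m n with h | h
  · rw [dist_comm]; exact key m n hm h
  · exact key n m hn h

lemma my_hard (A : StarSubalgebra ℂ (H →L[ℂ] H)) (t : ℕ → H →L[ℂ] H)
    (htA : ∀ n, t n ∈ A)
    (h : ∀ a : ℕ → H →L[ℂ] H, (∀ n, a n ∈ A) →
      (∃ p : H →L[ℂ] H,
        Tendsto (fun N : ℕ => ∑ n ∈ Finset.range N, a n * star (a n)) atTop (𝓝 p)) →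
      ∃ s : H →L[ℂ] H,
        Tendsto (fun N : ℕ => ∑ n ∈ Finset.range N, a n * star (t n)) atTop (𝓝 s)) :
    ∃ C : ℝ, ∀ N : ℕ, ‖∑ n ∈ Finset.range N, t n * star (t n)‖ ≤ C := by
  classical
  by_contra hC
  push_neg at hC
  set T : ℕ → H →L[ℂ] H := fun N => ∑ n ∈ Finset.range N, t n * star (t n) with hTdef
  have step : ∀ k m : ℕ, ∃ m', m < m' ∧ (16:ℝ)^k ≤ ‖T m' - T m‖ := by
    intro k m
    obtain ⟨M, hM⟩ := hC (‖T m‖ + 16^k)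
    have h16 : (0:ℝ) < 16^k := by positivity
    have hlt : m < M := by
      by_contra hmM
      push_neg at hmM
      have := my_partial_norm_mono t hmM
      change ‖T M‖ ≤ ‖T m‖ at this
      linarith
    refine ⟨M, hlt, ?_⟩
    have := norm_sub_norm_le (T M) (T m)
    linarith
  let Nf : ℕ → ℕ := fun k => Nat.rec 0 (fun k ih => (step k ih).choose) k
  have hN0 : Nf 0 = 0 := rfl
  have hNlt : ∀ k, Nf k < Nf (k+1) := fun k => ((step k (Nf k)).choose_spec).1
  have hNd : ∀ k, (16:ℝ)^k ≤ ‖T (Nf (k+1)) - T (Nf k)‖ :=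
    fun k => ((step k (Nf k)).choose_spec).2
  have hNmono : StrictMono Nf := strictMono_nat_of_lt_succ hNlt
  have hNle : ∀ k, k ≤ Nf k := fun k => hNmono.le_apply
  set D : ℕ → H →L[ℂ] H :=
    fun k => ∑ n ∈ Finset.Ico (Nf k) (Nf (k+1)), t n * star (t n) with hDdef
  have hDeq : ∀ k, D k = T (Nf (k+1)) - T (Nf k) :=
    fun k => Finset.sum_Ico_eq_sub _ (hNmono k.lt_succ_self).le
  set d : ℕ → ℝ := fun k => ‖D k‖ with hddef
  have hd16 : ∀ k, (16:ℝ)^k ≤ d k := fun k => by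
    simp only [hddef, hDeq k]; exact hNd k
  have hd0 : ∀ k, (0:ℝ) < d k := fun k => lt_of_lt_of_le (by positivity) (hd16 k)
  set c : ℕ → ℝ := fun k => (Real.sqrt (2^k * d k))⁻¹ with hcdef
  have h2d0 : ∀ k, (0:ℝ) < 2^k * d k := fun k => mul_pos (by positivity) (hd0 k)
  have hc0 : ∀ k, 0 < c k := fun k => inv_pos.2 (Real.sqrt_pos.2 (h2d0 k))
  have hcc : ∀ k, (c k * c k) * d k = (1/2:ℝ)^k := by
    intro k
    have h1 : Real.sqrt (2^k * d k) * Real.sqrt (2^k * d k) = 2^k * d k :=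
      Real.mul_self_sqrt (h2d0 k).le
    have : c k * c k = (2^k * d k)⁻¹ := by rw [hcdef]; simp only [← mul_inv, h1]
    rw [this]
    field_simp [(hd0 k).ne']
    ring
    rw [← mul_pow]; norm_num
  have hcd : ∀ k, (1:ℝ) ≤ c k * d k := by
    intro k
    have h2dk : (2:ℝ)^k ≤ d k :=
      le_trans (pow_le_pow_left₀ (by norm_num) (by norm_num : (2:ℝ) ≤ 16) k) (hd16 k)
    have hsle : Real.sqrt (2^k * d k) ≤ d k := by
      have h5 : Real.sqrt (2^k * d k) ≤ Real.sqrt ((d k)^2) :=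
        Real.sqrt_le_sqrt (by nlinarith [hd0 k])
      rwa [Real.sqrt_sq (hd0 k).le] at h5
    have hsp : 0 < Real.sqrt (2^k * d k) := Real.sqrt_pos.2 (h2d0 k)
    have : c k * d k = d k / Real.sqrt (2^k * d k) := by
      rw [hcdef]; simp only [div_eq_mul_inv, mul_comm]
    rw [this, le_div_iff₀ hsp, one_mul]
    exact hsle
  -- block index
  let idx : ℕ → ℕ := fun n => @Nat.findGreatest (fun k => Nf k ≤ n) (fun _ => Nat.decLe _ _) n
  have idx_le : ∀ n, Nf (idx n) ≤ n := fun n =>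
    @Nat.findGreatest_spec 0 (fun k => Nf k ≤ n) (fun _ => Nat.decLe _ _) n
      (Nat.zero_le n) (by show Nf 0 ≤ n; rw [hN0]; exact Nat.zero_le n)
  have idx_eq : ∀ k n, Nf k ≤ n → n < Nf (k+1) → idx n = k := by
    intro k n h1 h2
    have hk_le : k ≤ idx n :=
      @Nat.le_findGreatest k (fun k => Nf k ≤ n) (fun _ => Nat.decLe _ _) n
        (le_trans (hNle k) h1) h1
    have hle2 : idx n ≤ k := by
      by_contra hcon
      push_neg at hcon
      have h3 : Nf (k+1) ≤ Nf (idx n) := hNmono.monotone hcon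
      have := le_trans h3 (idx_le n)
      omega
    omega
  set a : ℕ → H →L[ℂ] H := fun n => ((c (idx n) : ℝ) : ℂ) • t n with hadef
  have haA : ∀ n, a n ∈ A := fun n => SMulMemClass.smul_mem _ (htA n)
  have block_a : ∀ k, ∑ n ∈ Finset.Ico (Nf k) (Nf (k+1)), a n * star (a n)
      = ((c k * c k : ℝ) : ℂ) • D k := by
    intro k
    rw [hDdef]
    simp only [Finset.smul_sum]
    refine Finset.sum_congr rfl fun n hn => ?_
    rw [Finset.mem_Ico] at hn
    have hidx : idx n = k := idx_eq k n hn.1 hn.2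
    rw [hadef]
    simp only [hidx, star_smul, Complex.star_def, Complex.conj_ofReal]
    rw [smul_mul_smul_comm, Complex.ofReal_mul]
  have block_at : ∀ k, ∑ n ∈ Finset.Ico (Nf k) (Nf (k+1)), a n * star (t n)
      = ((c k : ℝ) : ℂ) • D k := by
    intro k
    rw [hDdef]
    simp only [Finset.smul_sum]
    refine Finset.sum_congr rfl fun n hn => ?_
    rw [Finset.mem_Ico] at hn
    have hidx : idx n = k := idx_eq k n hn.1 hn.2
    rw [hadef]
    simp only [hidx, smul_mul_assoc]
  have hnorm_term : ∀ k, ‖((c k * c k : ℝ) : ℂ) • D k‖ = (1/2:ℝ)^k := by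
    intro k
    rw [norm_smul, Complex.norm_real, Real.norm_eq_abs,
      abs_of_pos (mul_pos (hc0 k) (hc0 k))]
    exact hcc k
  have blocks_decomp : ∀ j J, j ≤ J →
      ∑ n ∈ Finset.Ico (Nf j) (Nf J), a n * star (a n)
        = ∑ k ∈ Finset.Ico j J, ((c k * c k : ℝ) : ℂ) • D k := by
    intro j J hjJ
    induction J, hjJ using Nat.le_induction with
    | base => simp
    | succ J hjJ ih =>
      rw [← Finset.sum_Ico_consecutive _ (hNmono.monotone hjJ) (hNmono J.lt_succ_self).le,
        ih, block_a J, Finset.sum_Ico_succ_top hjJ]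
  have geometric : ∀ j n : ℕ, ∑ k ∈ Finset.Ico j n, (1/2:ℝ)^k ≤ 2 * (1/2)^j := by
    intro j n
    rcases le_or_gt j n with hjn | hjn
    · rw [Finset.sum_Ico_eq_sum_range]
      calc ∑ i ∈ Finset.range (n - j), (1/2:ℝ)^(j+i)
          = (1/2)^j * ∑ i ∈ Finset.range (n-j), (1/2)^i := by
            rw [Finset.mul_sum]
            exact Finset.sum_congr rfl fun i _ => pow_add _ _ _
        _ ≤ (1/2)^j * 2 :=
            mul_le_mul_of_nonneg_left (sum_geometric_two_le _) (by positivity)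
        _ = 2 * (1/2)^j := mul_comm _ _
    · rw [Finset.Ico_eq_empty (by omega)]
      simp only [Finset.sum_empty]
      positivity
  have tail_bound : ∀ j m n, Nf j ≤ m → m ≤ n →
      ‖(∑ k ∈ Finset.range n, a k * star (a k)) - ∑ k ∈ Finset.range m, a k * star (a k)‖
        ≤ 2 * (1/2:ℝ)^j := by
    intro j m n hjm hmn
    have e1 : (∑ k ∈ Finset.range n, a k * star (a k))
        - ∑ k ∈ Finset.range m, a k * star (a k)
        = ∑ k ∈ Finset.Ico m n, a k * star (a k) := (Finset.sum_Ico_eq_sub _ hmn).symm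
    rw [e1]
    have hsub : Finset.Ico m n ⊆ Finset.Ico (Nf j) (Nf n) :=
      Finset.Ico_subset_Ico hjm (hNle n)
    have hle1 : (∑ k ∈ Finset.Ico m n, a k * star (a k))
        ≤ ∑ k ∈ Finset.Ico (Nf j) (Nf n), a k * star (a k) :=
      Finset.sum_le_sum_of_subset_of_nonneg hsub fun k _ _ => mul_star_self_nonneg _
    have h0 : (0 : H →L[ℂ] H) ≤ ∑ k ∈ Finset.Ico m n, a k * star (a k) :=
      Finset.sum_nonneg fun k _ => mul_star_self_nonneg _
    have hjn : j ≤ n := le_trans (le_trans (hNle j) hjm) hmn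
    calc ‖∑ k ∈ Finset.Ico m n, a k * star (a k)‖
        ≤ ‖∑ k ∈ Finset.Ico (Nf j) (Nf n), a k * star (a k)‖ := my_norm_mono h0 hle1
      _ = ‖∑ k ∈ Finset.Ico j n, ((c k * c k : ℝ) : ℂ) • D k‖ := by
          rw [blocks_decomp j n hjn]
      _ ≤ ∑ k ∈ Finset.Ico j n, ‖((c k * c k : ℝ) : ℂ) • D k‖ := norm_sum_le _ _
      _ = ∑ k ∈ Finset.Ico j n, (1/2:ℝ)^k :=
          Finset.sum_congr rfl fun k _ => hnorm_term k
      _ ≤ 2 * (1/2:ℝ)^j := geometric j n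
  have hPconv : ∃ p, Tendsto (fun N : ℕ => ∑ n ∈ Finset.range N, a n * star (a n))
      atTop (𝓝 p) := by
    apply cauchySeq_tendsto_of_complete
    rw [Metric.cauchySeq_iff]
    intro ε hε
    obtain ⟨j, hj⟩ : ∃ j : ℕ, (1/2:ℝ)^j < ε/2 :=
      exists_pow_lt_of_lt_one (by positivity) (by norm_num)
    refine ⟨Nf j, fun m hm n hn => ?_⟩
    have key : ∀ m n, Nf j ≤ m → m ≤ n →
        dist (∑ k ∈ Finset.range n, a k * star (a k))
          (∑ k ∈ Finset.range m, a k * star (a k)) < ε := by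
      intro m n h1 h2
      rw [dist_eq_norm]
      calc ‖_ - _‖ ≤ 2 * (1/2:ℝ)^j := tail_bound j m n h1 h2
        _ < ε := by linarith
    rcases le_total m n with hle | hle
    · rw [dist_comm]; exact key m n hm hle
    · exact key n m hn hle
  obtain ⟨s, hs⟩ := h a haA hPconv
  have hScauchy := hs.cauchySeq
  rw [Metric.cauchySeq_iff] at hScauchy
  obtain ⟨N₀, hN₀⟩ := hScauchy 1 one_pos
  have h1 : N₀ ≤ Nf N₀ := hNle N₀
  have h2 : N₀ ≤ Nf (N₀+1) := le_trans h1 (hNmono N₀.lt_succ_self).le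
  have hdlt := hN₀ (Nf (N₀+1)) h2 (Nf N₀) h1
  rw [dist_eq_norm] at hdlt
  have e : (∑ n ∈ Finset.range (Nf (N₀+1)), a n * star (t n))
      - (∑ n ∈ Finset.range (Nf N₀), a n * star (t n))
      = ∑ n ∈ Finset.Ico (Nf N₀) (Nf (N₀+1)), a n * star (t n) :=
    (Finset.sum_Ico_eq_sub _ (hNmono N₀.lt_succ_self).le).symm
  rw [e, block_at N₀] at hdlt
  have hnrm : ‖((c N₀ : ℝ) : ℂ) • D N₀‖ = c N₀ * d N₀ := by
    rw [norm_smul, Complex.norm_real, Real.norm_eq_abs, abs_of_pos (hc0 N₀)]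
  rw [hnrm] at hdlt
  linarith [hcd N₀]

/-- for a sequence `(tₙ)` of left multipliers of a non-degenerately acting
C*-algebra `A`, the series `∑ aₙtₙ*` converges in norm for every `(aₙ) ∈ ℓ²(A)` if and only
if the partial sums of `∑ tₙtₙ*` are norm-bounded. -/
theorem stmt_2 (A : StarSubalgebra ℂ (H →L[ℂ] H))
    (hA : IsClosed (A : Set (H →L[ℂ] H)))
    (hnd : Nondegenerate (A : Set (H →L[ℂ] H)))
    (t : ℕ → H →L[ℂ] H) (ht : ∀ n, t n ∈ LeftMult (A : Set (H →L[ℂ] H))) :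
    (∀ a : ℕ → H →L[ℂ] H, MemL2 (A : Set (H →L[ℂ] H)) a →
      ∃ s : H →L[ℂ] H,
        Tendsto (fun N : ℕ => ∑ n ∈ Finset.range N, a n * star (t n)) atTop (𝓝 s))
    ↔ (∃ C : ℝ, ∀ N : ℕ, ‖∑ n ∈ Finset.range N, t n * star (t n)‖ ≤ C) := by
  constructor
  · intro h
    exact my_hard A t (fun n => by simpa using ht n 1 (one_mem A))
      (fun a ha hp => h a ⟨ha, hp⟩)
  · rintro ⟨C, hC⟩ a ⟨haA, p, hp⟩
    exact my_easy t C hC a ⟨p, hp⟩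
end
end

section
/- Let A ⊆ B(H) act non-degenerately and let (t_n) ⊆ LM(A) satisfy the equivalent conditions of the previous lemma. Define L : ℓ²(A) → A by L((a_n)) = ∑ a_n t_n* and let L^N be the N-th partial sum operator. Then L is a bounded module map and ‖L‖ = lim_N ‖L^N‖ = lim_N ‖∑_{n=1}^N t_n t_n*‖^{1/2}. -/
open Filter Topology

noncomputable section

variable {H : Type*} [NormedAddCommGroup H] [InnerProductSpace ℂ H] [CompleteSpace H]

/-- The Hilbert C*-module norm of an element of `ℓ²(A)` (or `ℓ²_strong`). -/
def l2norm (a : ℕ → H →L[ℂ] H) : ℝ :=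
  Real.sqrt (⨆ N : ℕ, ‖∑ n ∈ Finset.range N, a n * star (a n)‖)

section Aux

set_option linter.unusedSectionVars false

lemma sum_ite_range' {M : Type*} [AddCommMonoid M] (g : ℕ → M) (K N : ℕ) :
    ∑ n ∈ Finset.range K, (if n < N then g n else 0) = ∑ n ∈ Finset.range (min K N), g n := by
  rw [← Finset.sum_filter]
  apply Finset.sum_congr _ (fun _ _ => rfl)
  ext n; simp only [Finset.mem_filter, Finset.mem_range, lt_min_iff]

lemma sum_norm_star_apply_sq' (t : ℕ → H →L[ℂ] H) (N : ℕ) (ξ : H) :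
    ∑ n ∈ Finset.range N, ‖(star (t n)) ξ‖ ^ 2
      = RCLike.re (inner ℂ ((∑ n ∈ Finset.range N, t n * star (t n)) ξ) ξ : ℂ) := by
  rw [ContinuousLinearMap.sum_apply, sum_inner, map_sum]
  refine Finset.sum_congr rfl fun n _ => ?_
  rw [ContinuousLinearMap.mul_apply, ContinuousLinearMap.star_eq_adjoint]
  rw [show (t n) = (ContinuousLinearMap.adjoint (ContinuousLinearMap.adjoint (t n))) from
    (ContinuousLinearMap.adjoint_adjoint (t n)).symm]
  rw [ContinuousLinearMap.adjoint_inner_left, ContinuousLinearMap.adjoint_adjoint]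
  rw [inner_self_eq_norm_sq]

lemma quad_le' (T : H →L[ℂ] H) (ξ : H) :
    RCLike.re (inner ℂ (T ξ) ξ : ℂ) ≤ ‖T‖ * ‖ξ‖ ^ 2 := by
  calc RCLike.re (inner ℂ (T ξ) ξ : ℂ) ≤ ‖T ξ‖ * ‖ξ‖ := re_inner_le_norm _ _
  _ ≤ (‖T‖ * ‖ξ‖) * ‖ξ‖ := by gcongr; exact T.le_opNorm ξ
  _ = ‖T‖ * ‖ξ‖ ^ 2 := by ring

lemma row_bound' (a τ : ℕ → H →L[ℂ] H) (N : ℕ) :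
    ‖∑ n ∈ Finset.range N, a n * star (τ n)‖ ≤
      Real.sqrt ‖∑ n ∈ Finset.range N, a n * star (a n)‖ *
      Real.sqrt ‖∑ n ∈ Finset.range N, τ n * star (τ n)‖ := by
  set T := ∑ n ∈ Finset.range N, a n * star (τ n) with hT
  set Q := ‖∑ n ∈ Finset.range N, a n * star (a n)‖ with hQ
  set S := ‖∑ n ∈ Finset.range N, τ n * star (τ n)‖ with hS
  have hQ0 : 0 ≤ Q := norm_nonneg _
  have hS0 : 0 ≤ S := norm_nonneg _
  refine ContinuousLinearMap.opNorm_le_bound _ (by positivity) fun ξ => ?_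
  have key : ‖T ξ‖ ^ 2 ≤ (Real.sqrt S * ‖ξ‖) * (Real.sqrt Q * ‖T ξ‖) := by
    have h1 : ‖T ξ‖ ^ 2 = RCLike.re (inner ℂ (T ξ) (T ξ) : ℂ) :=
      (inner_self_eq_norm_sq _).symm
    have h2 : ∀ y : H, RCLike.re (inner ℂ (T ξ) y : ℂ)
        = ∑ n ∈ Finset.range N, RCLike.re (inner ℂ ((star (τ n)) ξ) ((star (a n)) y) : ℂ) := by
      intro y
      conv_lhs => rw [hT, ContinuousLinearMap.sum_apply, sum_inner, map_sum]
      refine Finset.sum_congr rfl fun n _ => ?_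
      congr 1
      rw [ContinuousLinearMap.mul_apply, ContinuousLinearMap.star_eq_adjoint,
        ContinuousLinearMap.star_eq_adjoint]
      rw [show (a n) = (ContinuousLinearMap.adjoint (ContinuousLinearMap.adjoint (a n))) from
        (ContinuousLinearMap.adjoint_adjoint (a n)).symm]
      rw [ContinuousLinearMap.adjoint_inner_left, ContinuousLinearMap.adjoint_adjoint]
    have h3 : ∑ n ∈ Finset.range N, RCLike.re (inner ℂ ((star (τ n)) ξ) ((star (a n)) (T ξ)) : ℂ)
        ≤ ∑ n ∈ Finset.range N, ‖(star (τ n)) ξ‖ * ‖(star (a n)) (T ξ)‖ := by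
      refine Finset.sum_le_sum fun n _ => re_inner_le_norm _ _
    have h4 : (∑ n ∈ Finset.range N, ‖(star (τ n)) ξ‖ * ‖(star (a n)) (T ξ)‖) ^ 2
        ≤ (∑ n ∈ Finset.range N, ‖(star (τ n)) ξ‖ ^ 2)
          * (∑ n ∈ Finset.range N, ‖(star (a n)) (T ξ)‖ ^ 2) :=
      Finset.sum_mul_sq_le_sq_mul_sq _ _ _
    have h5 : ∑ n ∈ Finset.range N, ‖(star (τ n)) ξ‖ ^ 2 ≤ S * ‖ξ‖ ^ 2 := by
      rw [sum_norm_star_apply_sq']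
      exact quad_le' _ _
    have h6 : ∑ n ∈ Finset.range N, ‖(star (a n)) (T ξ)‖ ^ 2 ≤ Q * ‖T ξ‖ ^ 2 := by
      rw [sum_norm_star_apply_sq']
      exact quad_le' _ _
    have h7 : (∑ n ∈ Finset.range N, ‖(star (τ n)) ξ‖ * ‖(star (a n)) (T ξ)‖) ^ 2
        ≤ (S * ‖ξ‖ ^ 2) * (Q * ‖T ξ‖ ^ 2) := by
      refine h4.trans (mul_le_mul h5 h6 (Finset.sum_nonneg fun n _ => by positivity)
        (by positivity))
    have h8 : ∑ n ∈ Finset.range N, ‖(star (τ n)) ξ‖ * ‖(star (a n)) (T ξ)‖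
        ≤ (Real.sqrt S * ‖ξ‖) * (Real.sqrt Q * ‖T ξ‖) := by
      have hL0 : 0 ≤ ∑ n ∈ Finset.range N, ‖(star (τ n)) ξ‖ * ‖(star (a n)) (T ξ)‖ :=
        Finset.sum_nonneg fun n _ => by positivity
      have h9 := Real.sqrt_le_sqrt h7
      rwa [Real.sqrt_sq hL0,
        show (S * ‖ξ‖ ^ 2) * (Q * ‖T ξ‖ ^ 2) = ((Real.sqrt S * ‖ξ‖) * (Real.sqrt Q * ‖T ξ‖)) ^ 2
          by rw [mul_pow, mul_pow, mul_pow, Real.sq_sqrt hS0, Real.sq_sqrt hQ0],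
        Real.sqrt_sq (by positivity)] at h9
    calc ‖T ξ‖ ^ 2 = _ := h1
      _ = _ := h2 (T ξ)
      _ ≤ _ := h3
      _ ≤ _ := h8
  rcases eq_or_ne ‖T ξ‖ 0 with h0 | h0
  · rw [h0]; positivity
  · have hpos : 0 < ‖T ξ‖ := lt_of_le_of_ne (norm_nonneg _) (Ne.symm h0)
    nlinarith [Real.sqrt_nonneg S, Real.sqrt_nonneg Q, norm_nonneg ξ]

end Aux

/-- under the (equivalent) conditions of the previous lemma, the map
`L((aₙ)) = ∑ aₙtₙ*` is a bounded `A`-module map `ℓ²(A) → A`, and its operator norm equals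
`lim_N ‖Lᴺ‖ = lim_N ‖∑_{n<N} tₙtₙ*‖^{1/2}`, where `Lᴺ` is the `N`-th partial-sum operator. -/
theorem stmt_3 (A : StarSubalgebra ℂ (H →L[ℂ] H))
    (hA : IsClosed (A : Set (H →L[ℂ] H)))
    (hnd : Nondegenerate (A : Set (H →L[ℂ] H)))
    (t : ℕ → H →L[ℂ] H) (ht : ∀ n, t n ∈ LeftMult (A : Set (H →L[ℂ] H)))
    (htb : ∃ C : ℝ, ∀ N : ℕ, ‖∑ n ∈ Finset.range N, t n * star (t n)‖ ≤ C)
    (L : (ℕ → H →L[ℂ] H) → (H →L[ℂ] H))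
    (hL : ∀ a, MemL2 (A : Set (H →L[ℂ] H)) a →
      Tendsto (fun N : ℕ => ∑ n ∈ Finset.range N, a n * star (t n)) atTop (𝓝 (L a))) :
    -- `L` takes values in `A`
    (∀ a, MemL2 (A : Set (H →L[ℂ] H)) a → L a ∈ A)
    ∧
    -- `L` is an `A`-module map
    (∀ b ∈ (A : Set (H →L[ℂ] H)), ∀ a, MemL2 (A : Set (H →L[ℂ] H)) a →
      L (fun n => b * a n) = b * L a)
    ∧
    -- `L` is bounded
    (∀ a, MemL2 (A : Set (H →L[ℂ] H)) a →
      ‖L a‖ ≤ Real.sqrt (⨆ N : ℕ, ‖∑ n ∈ Finset.range N, t n * star (t n)‖) * l2norm a)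
    ∧
    -- `lim_N ‖∑_{n<N} tₙtₙ*‖^{1/2} = ‖L‖` (the operator norm of `L` over the unit ball)
    Tendsto (fun N : ℕ => Real.sqrt ‖∑ n ∈ Finset.range N, t n * star (t n)‖) atTop
      (𝓝 (sSup {r : ℝ | ∃ a, MemL2 (A : Set (H →L[ℂ] H)) a ∧ l2norm a ≤ 1 ∧ r = ‖L a‖}))
    ∧
    -- `lim_N ‖Lᴺ‖ = ‖L‖`
    Tendsto
      (fun N : ℕ => sSup {r : ℝ | ∃ a, MemL2 (A : Set (H →L[ℂ] H)) a ∧ l2norm a ≤ 1 ∧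
        r = ‖∑ n ∈ Finset.range N, a n * star (t n)‖}) atTop
      (𝓝 (sSup {r : ℝ | ∃ a, MemL2 (A : Set (H →L[ℂ] H)) a ∧ l2norm a ≤ 1 ∧ r = ‖L a‖})) := by
  classical
  have htA : ∀ n, t n ∈ A := fun n => by simpa using ht n 1 (one_mem A)
  obtain ⟨C, hC⟩ := htb
  -- basic facts about S N := ∑_{n<N} t n (t n)*
  have hSbdd : BddAbove (Set.range fun N : ℕ => ‖∑ n ∈ Finset.range N, t n * star (t n)‖) :=
    ⟨C, by rintro x ⟨N, rfl⟩; exact hC N⟩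
  have hSmono : Monotone fun N : ℕ => ‖∑ n ∈ Finset.range N, t n * star (t n)‖ := by
    intro K N hKN
    refine CStarAlgebra.norm_le_norm_of_nonneg_of_le ?_ ?_
    · exact Finset.sum_nonneg fun n _ => mul_star_self_nonneg _
    · exact Finset.sum_le_sum_of_subset_of_nonneg (Finset.range_subset_range.mpr hKN)
        fun n _ _ => mul_star_self_nonneg _
  set M : ℝ := Real.sqrt (⨆ N : ℕ, ‖∑ n ∈ Finset.range N, t n * star (t n)‖) with hMdef
  have hM0 : 0 ≤ M := Real.sqrt_nonneg _
  have hSleM : ∀ N : ℕ, Real.sqrt ‖∑ n ∈ Finset.range N, t n * star (t n)‖ ≤ M := fun N =>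
    Real.sqrt_le_sqrt (le_ciSup hSbdd N)
  -- any element of ℓ²(A) has partial sums dominated by its l2norm
  have hQbdd : ∀ a : ℕ → H →L[ℂ] H, MemL2 (A : Set (H →L[ℂ] H)) a → ∀ N : ℕ,
      Real.sqrt ‖∑ n ∈ Finset.range N, a n * star (a n)‖ ≤ l2norm a := by
    rintro a ⟨_, s, hs⟩ N
    exact Real.sqrt_le_sqrt (le_ciSup (hs.norm.bddAbove_range) N)
  have hl2nonneg : ∀ a : ℕ → H →L[ℂ] H, 0 ≤ l2norm a := fun a => Real.sqrt_nonneg _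
  -- bound on partial sums
  have hpartial : ∀ a, MemL2 (A : Set (H →L[ℂ] H)) a → ∀ N : ℕ,
      ‖∑ n ∈ Finset.range N, a n * star (t n)‖ ≤ M * l2norm a := by
    intro a ha N
    refine (row_bound' a t N).trans ?_
    rw [mul_comm]
    exact mul_le_mul (hSleM N) (hQbdd a ha N) (Real.sqrt_nonneg _) hM0
  -- conjunct 3
  have c3 : ∀ a, MemL2 (A : Set (H →L[ℂ] H)) a → ‖L a‖ ≤ M * l2norm a := by
    intro a ha
    exact le_of_tendsto (hL a ha).norm (Filter.Eventually.of_forall (hpartial a ha))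
  -- conjunct 1
  have c1 : ∀ a, MemL2 (A : Set (H →L[ℂ] H)) a → L a ∈ A := by
    intro a ha
    refine hA.mem_of_tendsto (hL a ha) (Filter.Eventually.of_forall fun N => ?_)
    exact sum_mem fun n _ => mul_mem (ha.1 n) (star_mem (htA n))
  -- conjunct 2
  have c2 : ∀ b ∈ (A : Set (H →L[ℂ] H)), ∀ a, MemL2 (A : Set (H →L[ℂ] H)) a →
      L (fun n => b * a n) = b * L a := by
    intro b hb a ha
    obtain ⟨ham, s, hs⟩ := ha
    have hexp : ∀ N : ℕ, ∑ n ∈ Finset.range N, (b * a n) * star (b * a n)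
        = b * (∑ n ∈ Finset.range N, a n * star (a n)) * star b := by
      intro N
      rw [Finset.mul_sum, Finset.sum_mul]
      exact Finset.sum_congr rfl fun n _ => by rw [star_mul]; simp [mul_assoc]
    have hmem : MemL2 (A : Set (H →L[ℂ] H)) (fun n => b * a n) := by
      refine ⟨fun n => mul_mem hb (ham n), b * s * star b, ?_⟩
      simp only [hexp]
      exact (tendsto_const_nhds.mul hs).mul tendsto_const_nhds
    have h2 : Tendsto (fun N : ℕ => ∑ n ∈ Finset.range N, (b * a n) * star (t n)) atTop
        (𝓝 (b * L a)) := by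
      have hexp2 : ∀ N : ℕ, ∑ n ∈ Finset.range N, (b * a n) * star (t n)
          = b * ∑ n ∈ Finset.range N, a n * star (t n) := by
        intro N
        rw [Finset.mul_sum]
        exact Finset.sum_congr rfl fun n _ => (mul_assoc _ _ _)
      simp only [hexp2]
      exact tendsto_const_nhds.mul (hL a ⟨ham, s, hs⟩)
    exact tendsto_nhds_unique (hL _ hmem) h2
  -- zero element facts
  have hzero : MemL2 (A : Set (H →L[ℂ] H)) (fun _ => 0) := by
    refine ⟨fun _ => zero_mem A, 0, ?_⟩
    simpa using (tendsto_const_nhds : Tendsto (fun _ : ℕ => (0 : H →L[ℂ] H)) atTop _)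
  have hLzero : L (fun _ => 0) = 0 := by
    refine tendsto_nhds_unique (hL _ hzero) ?_
    simpa using (tendsto_const_nhds : Tendsto (fun _ : ℕ => (0 : H →L[ℂ] H)) atTop _)
  have hl2zero : l2norm (fun _ : ℕ => (0 : H →L[ℂ] H)) = 0 := by
    simp [l2norm, ciSup_const]
  -- the big set
  set bigset : Set ℝ :=
    {r : ℝ | ∃ a, MemL2 (A : Set (H →L[ℂ] H)) a ∧ l2norm a ≤ 1 ∧ r = ‖L a‖} with hbigset
  have h0mem : (0 : ℝ) ∈ bigset := ⟨fun _ => 0, hzero, by rw [hl2zero]; norm_num,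
    by rw [hLzero, norm_zero]⟩
  have hub : ∀ r ∈ bigset, r ≤ M := by
    rintro r ⟨a, ha, hle, rfl⟩
    exact (c3 a ha).trans (mul_le_of_le_one_right hM0 hle)
  have hbdd : BddAbove bigset := ⟨M, hub⟩
  -- the example elements
  have hexample : ∀ N : ℕ, ‖∑ n ∈ Finset.range N, t n * star (t n)‖ ≠ 0 →
      ∃ a, MemL2 (A : Set (H →L[ℂ] H)) a ∧ l2norm a ≤ 1 ∧
        ‖L a‖ = Real.sqrt ‖∑ n ∈ Finset.range N, t n * star (t n)‖ ∧
        ‖∑ n ∈ Finset.range N, a n * star (t n)‖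
          = Real.sqrt ‖∑ n ∈ Finset.range N, t n * star (t n)‖ := by
    intro N hSN
    set r : ℝ := Real.sqrt ‖∑ n ∈ Finset.range N, t n * star (t n)‖ with hrdef
    have hr0 : 0 < r := Real.sqrt_pos.mpr (lt_of_le_of_ne (norm_nonneg _) (Ne.symm hSN))
    have hr2 : r ^ 2 = ‖∑ n ∈ Finset.range N, t n * star (t n)‖ := Real.sq_sqrt (norm_nonneg _)
    set c : ℂ := ((r⁻¹ : ℝ) : ℂ) with hcdef
    have hcnorm : ‖c‖ = r⁻¹ := by
      rw [hcdef, Complex.norm_real, Real.norm_eq_abs, abs_of_nonneg (by positivity)]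
    set a : ℕ → H →L[ℂ] H := fun n => if n < N then c • t n else 0 with hadef
    -- term computations
    have hterm : ∀ n, a n * star (a n)
        = if n < N then ((r⁻¹ ^ 2 : ℝ) : ℂ) • (t n * star (t n)) else 0 := by
      intro n
      by_cases h : n < N
      · simp only [hadef, if_pos h, star_smul, smul_mul_assoc, mul_smul_comm, smul_smul]
        congr 1
        rw [hcdef, Complex.star_def, Complex.conj_ofReal, ← Complex.ofReal_mul, sq]
      · simp [hadef, h]
    have hterm2 : ∀ n, a n * star (t n)
        = if n < N then c • (t n * star (t n)) else 0 := by
      intro n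
      by_cases h : n < N
      · simp only [hadef, if_pos h, smul_mul_assoc]
      · simp [hadef, h]
    have hQa : ∀ K : ℕ, ∑ n ∈ Finset.range K, a n * star (a n)
        = ((r⁻¹ ^ 2 : ℝ) : ℂ) • ∑ n ∈ Finset.range (min K N), t n * star (t n) := by
      intro K
      simp only [hterm]
      rw [sum_ite_range' (fun n => ((r⁻¹ ^ 2 : ℝ) : ℂ) • (t n * star (t n))) K N, ← Finset.smul_sum]
    have hLa : ∀ K : ℕ, ∑ n ∈ Finset.range K, a n * star (t n)
        = c • ∑ n ∈ Finset.range (min K N), t n * star (t n) := by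
      intro K
      simp only [hterm2]
      rw [sum_ite_range' (fun n => c • (t n * star (t n))) K N, ← Finset.smul_sum]
    have hnormQ : ∀ K : ℕ, ‖∑ n ∈ Finset.range K, a n * star (a n)‖
        = r⁻¹ ^ 2 * ‖∑ n ∈ Finset.range (min K N), t n * star (t n)‖ := by
      intro K
      rw [hQa, norm_smul, Complex.norm_real, Real.norm_eq_abs, abs_of_nonneg (by positivity)]
    -- membership
    have hamem : MemL2 (A : Set (H →L[ℂ] H)) a := by
      refine ⟨fun n => ?_, ((r⁻¹ ^ 2 : ℝ) : ℂ) • ∑ n ∈ Finset.range N, t n * star (t n), ?_⟩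
      · by_cases h : n < N
        · simpa [hadef, if_pos h] using A.smul_mem (htA n) c
        · simp [hadef, h, zero_mem]
      · simp only [hQa]
        refine tendsto_atTop_of_eventually_const (i₀ := N) fun K hK => ?_
        rw [min_eq_right hK]
    -- l2norm = 1
    have hsup : (⨆ K : ℕ, ‖∑ n ∈ Finset.range K, a n * star (a n)‖)
        = r⁻¹ ^ 2 * ‖∑ n ∈ Finset.range N, t n * star (t n)‖ := by
      have hb : BddAbove (Set.range fun K : ℕ => ‖∑ n ∈ Finset.range K, a n * star (a n)‖) := by
        refine ⟨r⁻¹ ^ 2 * ‖∑ n ∈ Finset.range N, t n * star (t n)‖, ?_⟩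
        rintro x ⟨K, rfl⟩
        simp only [hnormQ]
        exact mul_le_mul_of_nonneg_left (hSmono (min_le_right K N)) (by positivity)
      refine le_antisymm (ciSup_le fun K => ?_) ?_
      · simp only [hnormQ]
        exact mul_le_mul_of_nonneg_left (hSmono (min_le_right K N)) (by positivity)
      · calc r⁻¹ ^ 2 * ‖∑ n ∈ Finset.range N, t n * star (t n)‖
            = ‖∑ n ∈ Finset.range N, a n * star (a n)‖ := by rw [hnormQ, min_self]
          _ ≤ _ := le_ciSup hb N
    have hl2 : l2norm a = 1 := by
      rw [l2norm, hsup, ← hr2]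
      rw [show r⁻¹ ^ 2 * r ^ 2 = 1 by field_simp]
      exact Real.sqrt_one
    -- L a
    have hLval : L a = c • ∑ n ∈ Finset.range N, t n * star (t n) := by
      refine tendsto_nhds_unique (hL a hamem) ?_
      simp only [hLa]
      refine tendsto_atTop_of_eventually_const (i₀ := N) fun K hK => ?_
      rw [min_eq_right hK]
    have hnormc : ‖c • ∑ n ∈ Finset.range N, t n * star (t n)‖ = r := by
      rw [norm_smul, hcnorm, ← hr2]
      field_simp
    refine ⟨a, hamem, le_of_eq hl2, ?_, ?_⟩
    · rw [hLval, hnormc]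
    · rw [hLa, min_self, hnormc]
    -- sSup bigset = M
  have hMsup : M = ⨆ N : ℕ, Real.sqrt ‖∑ n ∈ Finset.range N, t n * star (t n)‖ := by
    rw [hMdef]
    exact Monotone.map_ciSup_of_continuousAt (Real.continuous_sqrt.continuousAt)
      (fun _ _ h => Real.sqrt_le_sqrt h) hSbdd
  have hsupeq : sSup bigset = M := by
    refine le_antisymm (csSup_le ⟨0, h0mem⟩ hub) ?_
    rw [hMsup]
    refine ciSup_le fun N => ?_
    rcases eq_or_ne ‖∑ n ∈ Finset.range N, t n * star (t n)‖ 0 with h | h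
    · rw [h, Real.sqrt_zero]
      exact le_csSup hbdd h0mem
    · obtain ⟨a, ham, hle, heq, -⟩ := hexample N h
      exact le_csSup hbdd ⟨a, ham, hle, heq.symm⟩
  -- conjunct 4
  have c4 : Tendsto (fun N : ℕ => Real.sqrt ‖∑ n ∈ Finset.range N, t n * star (t n)‖) atTop
      (𝓝 (sSup bigset)) := by
    rw [hsupeq, hMsup]
    refine tendsto_atTop_ciSup (fun _ _ h => Real.sqrt_le_sqrt (hSmono h)) ?_
    exact ⟨M, by rintro x ⟨N, rfl⟩; exact hSleM N⟩
  -- conjunct 5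
  have c5eq : ∀ N : ℕ, sSup {r : ℝ | ∃ a, MemL2 (A : Set (H →L[ℂ] H)) a ∧ l2norm a ≤ 1 ∧
      r = ‖∑ n ∈ Finset.range N, a n * star (t n)‖}
      = Real.sqrt ‖∑ n ∈ Finset.range N, t n * star (t n)‖ := by
    intro N
    have h0m : (0 : ℝ) ∈ {r : ℝ | ∃ a, MemL2 (A : Set (H →L[ℂ] H)) a ∧ l2norm a ≤ 1 ∧
        r = ‖∑ n ∈ Finset.range N, a n * star (t n)‖} :=
      ⟨fun _ => 0, hzero, by rw [hl2zero]; norm_num, by simp⟩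
    have hub' : ∀ r ∈ {r : ℝ | ∃ a, MemL2 (A : Set (H →L[ℂ] H)) a ∧ l2norm a ≤ 1 ∧
        r = ‖∑ n ∈ Finset.range N, a n * star (t n)‖},
        r ≤ Real.sqrt ‖∑ n ∈ Finset.range N, t n * star (t n)‖ := by
      rintro r ⟨a, ha, hle, rfl⟩
      refine (row_bound' a t N).trans ?_
      calc Real.sqrt ‖∑ n ∈ Finset.range N, a n * star (a n)‖ *
            Real.sqrt ‖∑ n ∈ Finset.range N, t n * star (t n)‖
          ≤ 1 * Real.sqrt ‖∑ n ∈ Finset.range N, t n * star (t n)‖ := by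
            exact mul_le_mul_of_nonneg_right ((hQbdd a ha N).trans hle) (Real.sqrt_nonneg _)
        _ = _ := one_mul _
    refine le_antisymm (csSup_le ⟨0, h0m⟩ hub') ?_
    rcases eq_or_ne ‖∑ n ∈ Finset.range N, t n * star (t n)‖ 0 with h | h
    · rw [h, Real.sqrt_zero]
      exact le_csSup ⟨_, hub'⟩ h0m
    · obtain ⟨a, ham, hle, -, heq⟩ := hexample N h
      exact le_csSup ⟨_, hub'⟩ ⟨a, ham, hle, heq.symm⟩
  have c5 : Tendsto
      (fun N : ℕ => sSup {r : ℝ | ∃ a, MemL2 (A : Set (H →L[ℂ] H)) a ∧ l2norm a ≤ 1 ∧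
        r = ‖∑ n ∈ Finset.range N, a n * star (t n)‖}) atTop (𝓝 (sSup bigset)) := by
    simp only [c5eq]
    exact c4
  exact ⟨c1, c2, c3, c4, c5⟩
end
end

section
/- Let A ⊆ B(H) be a C*-algebra acting non-degenerately on H. The map φ : ℓ²_strong(LM(A)) → ℓ²(A)′ sending (t_n) to the map (a_n) ↦ ∑ a_n t_n* is an anti-linear isometric isomorphism of Banach A-modules onto the dual ℓ²(A)′ of all bounded module maps ℓ²(A) → A. -/
open Filter Topology

noncomputable section

variable {H : Type*} [NormedAddCommGroup H] [InnerProductSpace ℂ H] [CompleteSpace H]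

/-- Membership in `ℓ²_strong(LM(A))`. -/
def MemL2StrongLM (A : Set (H →L[ℂ] H)) (t : ℕ → H →L[ℂ] H) : Prop :=
  (∀ n, t n ∈ LeftMult A) ∧
    ∃ C : ℝ, ∀ N : ℕ, ‖∑ n ∈ Finset.range N, t n * star (t n)‖ ≤ C


/-!
Both directions rest on the estimate `‖∑ aₙtₙ*‖ ≤ ‖∑ aₙaₙ*‖^{1/2} ‖∑ tₙtₙ*‖^{1/2}` for finite sums,
which is the Cauchy–Schwarz inequality of the Hilbert C⋆-module `A^F` over `A`. It makes the
partial sums `∑ aₙtₙ*` Cauchy and bounds their limit by `‖a‖ ‖t‖`; the truncations of `t`, rescaled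
to norm `≤ 1`, show that this bound is attained.

Conversely, a bounded module map `L` is determined on finitely supported sequences by
`tₙ* = L(eₙ)`, where `eₙ` carries `1` in slot `n` (a star subalgebra of `B(H)` contains `1`).
Applying `L` to the truncations of `t` gives `‖∑_{n<N} tₙtₙ*‖ ≤ ‖L‖ ‖∑_{n<N} tₙtₙ*‖^{1/2}`, so `t`
is strongly square summable, and the boundedness of `L` on the tails of `a` gives
`L(a) = ∑ aₙtₙ*`.
-/

open Finset

section CStarAlgebra

variable {𝒜 : Type*} [CStarAlgebra 𝒜]

theorem norm_sum_smul_mul_star_smul {ι : Type*} (z : ℂ) (F : Finset ι) (a : ι → 𝒜) :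
    ‖∑ i ∈ F, (z • a i) * star (z • a i)‖ = ‖z‖ ^ 2 * ‖∑ i ∈ F, a i * star (a i)‖ := by
  simp only [star_smul, smul_mul_smul_comm, ← smul_sum, norm_smul, norm_mul, norm_star, sq]

variable [PartialOrder 𝒜] [StarOrderedRing 𝒜]

open scoped WithCStarModule in
theorem norm_sum_mul_star_le {ι : Type*} (F : Finset ι) (a t : ι → 𝒜) :
    ‖∑ i ∈ F, a i * star (t i)‖ ≤
      √‖∑ i ∈ F, a i * star (a i)‖ * √‖∑ i ∈ F, t i * star (t i)‖ := by
  have := CStarModule.norm_inner_le (A := 𝒜) C⋆ᵐᵒᵈ(𝒜, F → 𝒜)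
    (x := (WithCStarModule.equiv 𝒜 _).symm fun i ↦ t i)
    (y := (WithCStarModule.equiv 𝒜 _).symm fun i ↦ a i)
  simp only [WithCStarModule.pi_inner, WithCStarModule.pi_norm, WithCStarModule.inner_def,
    WithCStarModule.equiv_symm_pi_apply] at this
  rw [mul_comm, ← F.sum_coe_sort, ← F.sum_coe_sort, ← F.sum_coe_sort]
  exact this

theorem monotone_sum_range_mul_star_self (a : ℕ → 𝒜) :
    Monotone fun N ↦ ∑ n ∈ range N, a n * star (a n) :=
  monotone_nat_of_le_succ fun N ↦ by
    simpa only [sum_range_succ, le_add_iff_nonneg_right] using mul_star_self_nonneg (a N)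

theorem monotone_norm_sum_range_mul_star_self (a : ℕ → 𝒜) :
    Monotone fun N ↦ ‖∑ n ∈ range N, a n * star (a n)‖ := fun _ _ h ↦
  CStarAlgebra.norm_le_norm_of_nonneg_of_le (sum_nonneg fun n _ ↦ mul_star_self_nonneg (a n))
    (monotone_sum_range_mul_star_self a h)

theorem norm_sum_Ico_mul_star_self_le (a : ℕ → 𝒜) (m n : ℕ) :
    ‖∑ k ∈ Ico m n, a k * star (a k)‖ ≤ ‖∑ k ∈ range n, a k * star (a k)‖ :=
  CStarAlgebra.norm_le_norm_of_nonneg_of_le (sum_nonneg fun k _ ↦ mul_star_self_nonneg (a k))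
    (sum_le_sum_of_subset_of_nonneg (fun k ↦ by simp)
      fun k _ _ ↦ mul_star_self_nonneg (a k))

theorem norm_sum_Ico_mul_star_self_le_of_tendsto {a : ℕ → 𝒜} {s : 𝒜}
    (hs : Tendsto (fun N ↦ ∑ n ∈ range N, a n * star (a n)) atTop (𝓝 s)) (m n : ℕ) :
    ‖∑ k ∈ Ico m n, a k * star (a k)‖ ≤ ‖s - ∑ k ∈ range m, a k * star (a k)‖ := by
  rcases le_total m n with h | h
  · refine CStarAlgebra.norm_le_norm_of_nonneg_of_le
      (sum_nonneg fun k _ ↦ mul_star_self_nonneg (a k)) ?_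
    rw [sum_Ico_eq_sub _ h]
    exact sub_le_sub_right ((monotone_sum_range_mul_star_self a).ge_of_tendsto hs n) _
  · simp [Ico_eq_empty_of_le h]

theorem cauchySeq_sum_range_mul_star {a t : ℕ → 𝒜} {s : 𝒜} {C : ℝ}
    (hs : Tendsto (fun N ↦ ∑ n ∈ range N, a n * star (a n)) atTop (𝓝 s))
    (hC : ∀ N, ‖∑ n ∈ range N, t n * star (t n)‖ ≤ C) :
    CauchySeq fun N ↦ ∑ n ∈ range N, a n * star (t n) := by
  refine cauchySeq_of_le_tendsto_0' (fun m ↦ √‖s - ∑ k ∈ range m, a k * star (a k)‖ * √C)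
    (fun m n h ↦ ?_) ?_
  · rw [dist_comm, dist_eq_norm, ← sum_Ico_eq_sub _ h]
    exact (norm_sum_mul_star_le _ a t).trans <| mul_le_mul
      (Real.sqrt_le_sqrt (norm_sum_Ico_mul_star_self_le_of_tendsto hs m n))
      (Real.sqrt_le_sqrt ((norm_sum_Ico_mul_star_self_le t m n).trans (hC n)))
      (Real.sqrt_nonneg _) (Real.sqrt_nonneg _)
  · simpa using ((tendsto_const_nhds (x := s)).sub hs).norm.sqrt.mul_const √C

end CStarAlgebra

section Truncation

variable {R : Type*}

def trunc [Zero R] (a : ℕ → R) (N : ℕ) : ℕ → R := fun k ↦ if k < N then a k else 0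

theorem trunc_succ [AddZeroClass R] (a : ℕ → R) (N : ℕ) : trunc a (N + 1) = trunc a N + Pi.single N (a N) := by
  ext k
  simp only [trunc, Pi.add_apply, Pi.single_apply]
  split_ifs <;> simp_all <;> omega

variable [NonUnitalNonAssocRing R] [StarAddMonoid R]

theorem sum_range_trunc_mul_star (a b : ℕ → R) (N M : ℕ) :
    ∑ k ∈ range M, trunc a N k * star (b k) = ∑ k ∈ range (min M N), a k * star (b k) := by
  have hfilter : (range M).filter (· < N) = range (min M N) := by ext; simp
  simp only [trunc, ite_mul, zero_mul]
  rw [← sum_filter, hfilter]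

theorem sum_range_trunc_mul_star_trunc (a : ℕ → R) (N M : ℕ) :
    ∑ k ∈ range M, trunc a N k * star (trunc a N k) = ∑ k ∈ range (min M N), a k * star (a k) := by
  rw [← sum_range_trunc_mul_star]
  refine sum_congr rfl fun k _ ↦ ?_
  by_cases h : k < N <;> simp [trunc, h]

theorem sum_range_sub_trunc_mul_star_self (a : ℕ → R) (N M : ℕ) :
    ∑ k ∈ range M, (a - trunc a N) k * star ((a - trunc a N) k) =
      ∑ k ∈ Ico N M, a k * star (a k) := by
  have hfilter : (range M).filter (N ≤ ·) = Ico N M := by ext; simp; omega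
  rw [← hfilter, sum_filter]
  refine sum_congr rfl fun k _ ↦ ?_
  by_cases h : k < N <;> simp [trunc, h]

end Truncation

section L2

theorem l2norm_le_sqrt {a : ℕ → H →L[ℂ] H} {x : ℝ}
    (h : ∀ N, ‖∑ n ∈ range N, a n * star (a n)‖ ≤ x) : l2norm a ≤ √x :=
  Real.sqrt_le_sqrt (ciSup_le h)

theorem sqrt_norm_sum_range_le_l2norm {a : ℕ → H →L[ℂ] H}
    (h : BddAbove (Set.range fun N ↦ ‖∑ n ∈ range N, a n * star (a n)‖)) (N : ℕ) :
    √‖∑ n ∈ range N, a n * star (a n)‖ ≤ l2norm a :=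
  Real.sqrt_le_sqrt (le_ciSup h N)

theorem l2norm_trunc (a : ℕ → H →L[ℂ] H) (N : ℕ) :
    l2norm (trunc a N) = √‖∑ n ∈ range N, a n * star (a n)‖ := by
  have hle : ∀ M, ‖∑ k ∈ range M, trunc a N k * star (trunc a N k)‖ ≤
      ‖∑ n ∈ range N, a n * star (a n)‖ := fun M ↦ by
    rw [sum_range_trunc_mul_star_trunc]
    exact monotone_norm_sum_range_mul_star_self a (min_le_right M N)
  refine (l2norm_le_sqrt hle).antisymm ?_
  simpa [sum_range_trunc_mul_star_trunc] using
    sqrt_norm_sum_range_le_l2norm ⟨_, Set.forall_mem_range.2 hle⟩ N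

theorem tendsto_l2norm_sub_trunc {a : ℕ → H →L[ℂ] H} {s : H →L[ℂ] H}
    (hs : Tendsto (fun N ↦ ∑ n ∈ range N, a n * star (a n)) atTop (𝓝 s)) :
    Tendsto (fun N ↦ l2norm (a - trunc a N)) atTop (𝓝 0) := by
  refine squeeze_zero (fun _ ↦ Real.sqrt_nonneg _) (fun N ↦ l2norm_le_sqrt fun M ↦ ?_)
    (by simpa using ((tendsto_const_nhds (x := s)).sub hs).norm.sqrt)
  rw [sum_range_sub_trunc_mul_star_self]
  exact norm_sum_Ico_mul_star_self_le_of_tendsto hs N M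

variable (A : StarSubalgebra ℂ (H →L[ℂ] H))

theorem memL2_trunc {a : ℕ → H →L[ℂ] H} (ha : ∀ n, a n ∈ A) (N : ℕ) : MemL2 A (trunc a N) := by
  refine ⟨fun k ↦ ?_, ∑ n ∈ range N, a n * star (a n),
    tendsto_atTop_of_eventually_const (i₀ := N) fun M hM ↦ ?_⟩
  · by_cases h : k < N <;> simp [trunc, h, ha k]
  · rw [sum_range_trunc_mul_star_trunc, min_eq_right hM]

theorem MemL2.sub_trunc {a : ℕ → H →L[ℂ] H} (ha : MemL2 A a) (N : ℕ) :
    MemL2 A (a - trunc a N) := by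
  obtain ⟨haA, s, hs⟩ := ha
  refine ⟨fun k ↦ sub_mem (haA k) ((memL2_trunc A haA N).1 k), _,
    (hs.sub_const (∑ n ∈ range N, a n * star (a n))).congr' ?_⟩
  filter_upwards [eventually_ge_atTop N] with M hM
  rw [sum_range_sub_trunc_mul_star_self, sum_Ico_eq_sub _ hM]

theorem memL2_single {x : H →L[ℂ] H} (hx : x ∈ A) (n : ℕ) : MemL2 A (Pi.single n x) := by
  have : trunc (Pi.single n x) (n + 1) = Pi.single n x := by
    ext1 k
    by_cases h : k = n <;> simp [trunc, h]
  rw [← this]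
  exact memL2_trunc A (fun k ↦ by by_cases h : k = n <;> simp [h, hx]) (n + 1)

theorem exists_mem_tendsto_sum_range_mul_star (hA : IsClosed (A : Set (H →L[ℂ] H)))
    {a t : ℕ → H →L[ℂ] H} (ha : MemL2 A a) (htA : ∀ n, t n ∈ A) {C : ℝ}
    (hC : ∀ N, ‖∑ n ∈ range N, t n * star (t n)‖ ≤ C) :
    ∃ s ∈ A, Tendsto (fun N ↦ ∑ n ∈ range N, a n * star (t n)) atTop (𝓝 s) := by
  obtain ⟨haA, sa, hsa⟩ := ha
  obtain ⟨s, hs⟩ := cauchySeq_tendsto_of_complete (cauchySeq_sum_range_mul_star hsa hC)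
  exact ⟨s, hA.mem_of_tendsto hs (Eventually.of_forall fun N ↦
    sum_mem fun n _ ↦ mul_mem (haA n) (star_mem (htA n))), hs⟩

theorem norm_le_l2norm_mul_l2norm {a t : ℕ → H →L[ℂ] H} {s : H →L[ℂ] H}
    (ha : BddAbove (Set.range fun N ↦ ‖∑ n ∈ range N, a n * star (a n)‖))
    (ht : BddAbove (Set.range fun N ↦ ‖∑ n ∈ range N, t n * star (t n)‖))
    (hs : Tendsto (fun N ↦ ∑ n ∈ range N, a n * star (t n)) atTop (𝓝 s)) :
    ‖s‖ ≤ l2norm a * l2norm t :=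
  le_of_tendsto' hs.norm fun N ↦ (norm_sum_mul_star_le _ a t).trans <|
    mul_le_mul (sqrt_norm_sum_range_le_l2norm ha N) (sqrt_norm_sum_range_le_l2norm ht N)
      (Real.sqrt_nonneg _) (Real.sqrt_nonneg _)

/-- The norms `‖φ(t)(a)‖` for `a` in the unit ball of `ℓ²(A)`. -/
def normsOnUnitBall (t : ℕ → H →L[ℂ] H) : Set ℝ :=
  {r | ∃ a s, MemL2 A a ∧ l2norm a ≤ 1 ∧
    Tendsto (fun N ↦ ∑ n ∈ range N, a n * star (t n)) atTop (𝓝 s) ∧ r = ‖s‖}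

/-- The witness is the truncation of `t` at `N`, rescaled by `‖∑_{n<N} tₙtₙ*‖^{-1/2}`
(by `0⁻¹ = 0` this is `0` when that sum vanishes). -/
theorem sqrt_norm_sum_range_mem_normsOnUnitBall {t : ℕ → H →L[ℂ] H} (htA : ∀ n, t n ∈ A)
    (N : ℕ) : √‖∑ n ∈ range N, t n * star (t n)‖ ∈ normsOnUnitBall A t := by
  set P := ‖∑ n ∈ range N, t n * star (t n)‖
  set z : ℂ := (((√P)⁻¹ : ℝ) : ℂ)
  have hz : ‖z‖ = (√P)⁻¹ := by simp [z]
  refine ⟨trunc (z • t) N, z • ∑ n ∈ range N, t n * star (t n),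
    memL2_trunc A (fun n ↦ A.smul_mem (htA n) z) N, ?_,
    tendsto_atTop_of_eventually_const (i₀ := N) fun M hM ↦ ?_, ?_⟩
  · rw [l2norm_trunc]
    simp only [Pi.smul_apply]
    rw [norm_sum_smul_mul_star_smul, hz, inv_pow, Real.sq_sqrt (norm_nonneg _)]
    exact Real.sqrt_le_one.2 inv_mul_le_one
  · simp only [sum_range_trunc_mul_star, min_eq_right hM, Pi.smul_apply, smul_mul_assoc, smul_sum]
  · rw [norm_smul, hz, inv_mul_eq_div, Real.div_sqrt]

theorem sSup_normsOnUnitBall {t : ℕ → H →L[ℂ] H} (htA : ∀ n, t n ∈ A) {C : ℝ}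
    (hC : ∀ N, ‖∑ n ∈ range N, t n * star (t n)‖ ≤ C) :
    sSup (normsOnUnitBall A t) = l2norm t := by
  have hbdd : BddAbove (Set.range fun N ↦ ‖∑ n ∈ range N, t n * star (t n)‖) :=
    ⟨C, Set.forall_mem_range.2 hC⟩
  have hle : ∀ r ∈ normsOnUnitBall A t, r ≤ l2norm t := by
    rintro _ ⟨a, s, ⟨-, sa, hsa⟩, hna, hs, rfl⟩
    calc ‖s‖ ≤ l2norm a * l2norm t := norm_le_l2norm_mul_l2norm hsa.norm.bddAbove_range hbdd hs
      _ ≤ l2norm t := mul_le_of_le_one_left (Real.sqrt_nonneg _) hna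
  have hmem := sqrt_norm_sum_range_mem_normsOnUnitBall A htA
  have hnonneg : 0 ≤ sSup (normsOnUnitBall A t) :=
    (Real.sqrt_nonneg _).trans (le_csSup ⟨_, hle⟩ (hmem 0))
  refine le_antisymm (csSup_le ⟨_, hmem 0⟩ hle) ?_
  calc l2norm t ≤ √(sSup (normsOnUnitBall A t) ^ 2) :=
        l2norm_le_sqrt fun N ↦ (Real.sqrt_le_left hnonneg).1 (le_csSup ⟨_, hle⟩ (hmem N))
    _ = sSup (normsOnUnitBall A t) := Real.sqrt_sq hnonneg

section BoundedModuleMap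

variable {A} {L : (ℕ → H →L[ℂ] H) → (H →L[ℂ] H)}

theorem map_trunc_eq_sum
    (hLadd : ∀ a b, MemL2 A a → MemL2 A b → L (a + b) = L a + L b)
    (hLmod : ∀ c ∈ A, ∀ a, MemL2 A a → L (fun n ↦ c * a n) = c * L a)
    {a : ℕ → H →L[ℂ] H} (ha : ∀ n, a n ∈ A) (N : ℕ) :
    L (trunc a N) = ∑ n ∈ range N, a n * L (Pi.single n 1) := by
  induction N with
  | zero =>
    have h0 : trunc a 0 = 0 := funext fun k ↦ by simp [trunc]
    simpa [h0] using hLadd 0 0 (h0 ▸ memL2_trunc A ha 0) (h0 ▸ memL2_trunc A ha 0)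
  | succ N ih =>
    have hsingle : L (Pi.single N (a N)) = a N * L (Pi.single N 1) := by
      rw [← hLmod _ (ha N) _ (memL2_single A (one_mem A) N)]
      congr 1
      ext1 k
      by_cases h : k = N <;> simp [h]
    rw [trunc_succ, hLadd _ _ (memL2_trunc A ha N) (memL2_single A (ha N) N), ih, hsingle,
      sum_range_succ]

theorem norm_sum_range_mul_star_self_le_sq {t : ℕ → H →L[ℂ] H} (htA : ∀ n, t n ∈ A)
    (hLt : ∀ N, L (trunc t N) = ∑ n ∈ range N, t n * star (t n)) {C : ℝ}
    (hLbdd : ∀ a, MemL2 A a → ‖L a‖ ≤ C * l2norm a) (N : ℕ) :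
    ‖∑ n ∈ range N, t n * star (t n)‖ ≤ C ^ 2 := by
  have h := hLbdd _ (memL2_trunc A htA N)
  rw [hLt, l2norm_trunc] at h
  nlinarith [Real.sq_sqrt (norm_nonneg (∑ n ∈ range N, t n * star (t n))),
    Real.sqrt_nonneg ‖∑ n ∈ range N, t n * star (t n)‖]

theorem tendsto_sum_range_mul_star_map
    (hLadd : ∀ a b, MemL2 A a → MemL2 A b → L (a + b) = L a + L b) {t : ℕ → H →L[ℂ] H}
    (hLt : ∀ a, (∀ n, a n ∈ A) → ∀ N, L (trunc a N) = ∑ n ∈ range N, a n * star (t n))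
    {C : ℝ} (hLbdd : ∀ a, MemL2 A a → ‖L a‖ ≤ C * l2norm a) {a : ℕ → H →L[ℂ] H}
    (ha : MemL2 A a) :
    Tendsto (fun N ↦ ∑ n ∈ range N, a n * star (t n)) atTop (𝓝 (L a)) := by
  have htail : ∀ N, L a - ∑ n ∈ range N, a n * star (t n) = L (a - trunc a N) := fun N ↦ by
    rw [← hLt a ha.1 N, sub_eq_iff_eq_add', ← hLadd _ _ (memL2_trunc A ha.1 N) (ha.sub_trunc A N),
      add_sub_cancel]
  obtain ⟨-, s, hs⟩ := id ha
  rw [tendsto_iff_norm_sub_tendsto_zero]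
  refine squeeze_zero (fun _ ↦ norm_nonneg _) (fun N ↦ ?_)
    (by simpa using (tendsto_l2norm_sub_trunc hs).const_mul C)
  rw [norm_sub_rev, htail]
  exact hLbdd _ (ha.sub_trunc A N)

theorem exists_memL2StrongLM_tendsto_map (hLmem : ∀ a, MemL2 A a → L a ∈ A)
    (hLadd : ∀ a b, MemL2 A a → MemL2 A b → L (a + b) = L a + L b)
    (hLmod : ∀ c ∈ A, ∀ a, MemL2 A a → L (fun n ↦ c * a n) = c * L a)
    {C : ℝ} (hLbdd : ∀ a, MemL2 A a → ‖L a‖ ≤ C * l2norm a) :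
    ∃ t : ℕ → H →L[ℂ] H, MemL2StrongLM A t ∧
      ∀ a, MemL2 A a → Tendsto (fun N ↦ ∑ n ∈ range N, a n * star (t n)) atTop (𝓝 (L a)) := by
  set t : ℕ → H →L[ℂ] H := fun n ↦ star (L (Pi.single n 1))
  have htA : ∀ n, t n ∈ A := fun n ↦ star_mem (hLmem _ (memL2_single A (one_mem A) n))
  have hLt : ∀ a, (∀ n, a n ∈ A) → ∀ N, L (trunc a N) = ∑ n ∈ range N, a n * star (t n) := by
    simpa [t] using fun a ha ↦ map_trunc_eq_sum hLadd hLmod ha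
  exact ⟨t, ⟨fun n b hb ↦ mul_mem (htA n) hb, C ^ 2,
    norm_sum_range_mul_star_self_le_sq htA (hLt t htA) hLbdd⟩,
    fun a ha ↦ tendsto_sum_range_mul_star_map hLadd hLt hLbdd ha⟩

end BoundedModuleMap

end L2

theorem stmt_5_general (A : StarSubalgebra ℂ (H →L[ℂ] H))
    (hA : IsClosed (A : Set (H →L[ℂ] H))) :
    -- `φ` is well defined and isometric: every `(tₙ) ∈ ℓ²_strong(LM(A))` induces a bounded
    -- module map on `ℓ²(A)` with values in `A`, whose operator norm equals `‖(tₙ)‖`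
    (∀ t : ℕ → H →L[ℂ] H, MemL2StrongLM (A : Set (H →L[ℂ] H)) t →
      (∀ a, MemL2 (A : Set (H →L[ℂ] H)) a →
        ∃ s ∈ (A : Set (H →L[ℂ] H)),
          Tendsto (fun N : ℕ => ∑ n ∈ Finset.range N, a n * star (t n)) atTop (𝓝 s)) ∧
      sSup {r : ℝ | ∃ a s, MemL2 (A : Set (H →L[ℂ] H)) a ∧ l2norm a ≤ 1 ∧
          Tendsto (fun N : ℕ => ∑ n ∈ Finset.range N, a n * star (t n)) atTop (𝓝 s) ∧
          r = ‖s‖}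
        = l2norm t)
    ∧
    -- `φ` is surjective: every bounded module map `L : ℓ²(A) → A` is represented by some
    -- `(tₙ) ∈ ℓ²_strong(LM(A))`
    (∀ L : (ℕ → H →L[ℂ] H) → (H →L[ℂ] H),
      (∀ a, MemL2 (A : Set (H →L[ℂ] H)) a → L a ∈ A) →
      (∀ a b, MemL2 (A : Set (H →L[ℂ] H)) a → MemL2 (A : Set (H →L[ℂ] H)) b →
        L (a + b) = L a + L b) →
      (∀ c ∈ (A : Set (H →L[ℂ] H)), ∀ a, MemL2 (A : Set (H →L[ℂ] H)) a →
        L (fun n => c * a n) = c * L a) →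
      (∃ C : ℝ, ∀ a, MemL2 (A : Set (H →L[ℂ] H)) a → ‖L a‖ ≤ C * l2norm a) →
      ∃ t : ℕ → H →L[ℂ] H, MemL2StrongLM (A : Set (H →L[ℂ] H)) t ∧
        ∀ a, MemL2 (A : Set (H →L[ℂ] H)) a →
          Tendsto (fun N : ℕ => ∑ n ∈ Finset.range N, a n * star (t n)) atTop (𝓝 (L a))) := by
  refine ⟨fun t ⟨htLM, C, hC⟩ ↦ ?_, fun L hLmem hLadd hLmod ⟨C, hLbdd⟩ ↦
    exists_memL2StrongLM_tendsto_map hLmem hLadd hLmod hLbdd⟩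
  have htA : ∀ n, t n ∈ A := fun n ↦ by simpa using htLM n 1 (one_mem A)
  exact ⟨fun a ha ↦ exists_mem_tendsto_sum_range_mul_star A hA ha htA hC,
    sSup_normsOnUnitBall A htA hC⟩

/-- the map `φ : ℓ²_strong(LM(A)) → ℓ²(A)′`, `φ((tₙ))((aₙ)) = ∑ aₙtₙ*`, is a
well-defined isometry onto the dual of `ℓ²(A)` (the Banach `A`-module of all bounded module
maps `ℓ²(A) → A`). -/
theorem stmt_5 (A : StarSubalgebra ℂ (H →L[ℂ] H))
    (hA : IsClosed (A : Set (H →L[ℂ] H)))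
    (hnd : Nondegenerate (A : Set (H →L[ℂ] H))) :
    -- `φ` is well defined and isometric: every `(tₙ) ∈ ℓ²_strong(LM(A))` induces a bounded
    -- module map on `ℓ²(A)` with values in `A`, whose operator norm equals `‖(tₙ)‖`
    (∀ t : ℕ → H →L[ℂ] H, MemL2StrongLM (A : Set (H →L[ℂ] H)) t →
      (∀ a, MemL2 (A : Set (H →L[ℂ] H)) a →
        ∃ s ∈ (A : Set (H →L[ℂ] H)),
          Tendsto (fun N : ℕ => ∑ n ∈ Finset.range N, a n * star (t n)) atTop (𝓝 s)) ∧
      sSup {r : ℝ | ∃ a s, MemL2 (A : Set (H →L[ℂ] H)) a ∧ l2norm a ≤ 1 ∧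
          Tendsto (fun N : ℕ => ∑ n ∈ Finset.range N, a n * star (t n)) atTop (𝓝 s) ∧
          r = ‖s‖}
        = l2norm t)
    ∧
    -- `φ` is surjective: every bounded module map `L : ℓ²(A) → A` is represented by some
    -- `(tₙ) ∈ ℓ²_strong(LM(A))`
    (∀ L : (ℕ → H →L[ℂ] H) → (H →L[ℂ] H),
      (∀ a, MemL2 (A : Set (H →L[ℂ] H)) a → L a ∈ A) →
      (∀ a b, MemL2 (A : Set (H →L[ℂ] H)) a → MemL2 (A : Set (H →L[ℂ] H)) b →
        L (a + b) = L a + L b) →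
      (∀ c ∈ (A : Set (H →L[ℂ] H)), ∀ a, MemL2 (A : Set (H →L[ℂ] H)) a →
        L (fun n => c * a n) = c * L a) →
      (∃ C : ℝ, ∀ a, MemL2 (A : Set (H →L[ℂ] H)) a → ‖L a‖ ≤ C * l2norm a) →
      ∃ t : ℕ → H →L[ℂ] H, MemL2StrongLM (A : Set (H →L[ℂ] H)) t ∧
        ∀ a, MemL2 (A : Set (H →L[ℂ] H)) a →
          Tendsto (fun N : ℕ => ∑ n ∈ Finset.range N, a n * star (t n)) atTop (𝓝 (L a))) :=
  stmt_5_general A hA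
end
end

section
/- Let A ⊆ B(H) act non-degenerately. The restriction of φ to M(ℓ²(A)) is an anti-linear isometric isomorphism of M(ℓ²(A)) onto the adjointable dual ℓ²(A)* = B(ℓ²(A), A). -/
open Filter Topology

noncomputable section

variable {H : Type*} [NormedAddCommGroup H] [InnerProductSpace ℂ H] [CompleteSpace H]

/-- Two-sided multipliers of `A` inside `B(H)`. -/
def Mult (A : Set (H →L[ℂ] H)) : Set (H →L[ℂ] H) :=
  {t | (∀ a ∈ A, t * a ∈ A) ∧ ∀ a ∈ A, a * t ∈ A}

/-- Membership in the multiplier module `M(ℓ²(A))`: each `tₙ ∈ M(A)` and `∑ tₙtₙ*`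
converges strictly. -/
def MemMultMod (A : Set (H →L[ℂ] H)) (t : ℕ → H →L[ℂ] H) : Prop :=
  (∀ n, t n ∈ Mult A) ∧
    ∃ s : H →L[ℂ] H,
      (∀ a ∈ A, Tendsto (fun N : ℕ => (∑ n ∈ Finset.range N, t n * star (t n)) * a)
        atTop (𝓝 (s * a))) ∧
      (∀ a ∈ A, Tendsto (fun N : ℕ => a * ∑ n ∈ Finset.range N, t n * star (t n))
        atTop (𝓝 (a * s)))

local notation "⟪" x ", " y "⟫" => @inner ℂ _ _ x y

lemma aux_sum_nonneg (x : ℕ → H →L[ℂ] H) (F : Finset ℕ) :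
    0 ≤ ∑ n ∈ F, x n * star (x n) :=
  Finset.sum_nonneg fun n _ => mul_star_self_nonneg (x n)

lemma aux_inner_eq (x : ℕ → H →L[ℂ] H) (F : Finset ℕ) (ξ : H) :
    ∑ n ∈ F, ‖(star (x n)) ξ‖^2 = RCLike.re ⟪(∑ n ∈ F, x n * star (x n)) ξ, ξ⟫ := by
  rw [ContinuousLinearMap.sum_apply, sum_inner, map_sum]
  refine Finset.sum_congr rfl fun n _ => ?_
  rw [ContinuousLinearMap.mul_apply, ← ContinuousLinearMap.adjoint_inner_right,
    ← ContinuousLinearMap.star_eq_adjoint]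
  simp [inner_self_eq_norm_sq]
  rw [← Complex.ofReal_pow, Complex.ofReal_re]

lemma aux_sum_sq_le (x : ℕ → H →L[ℂ] H) (F : Finset ℕ) (ξ : H) :
    ∑ n ∈ F, ‖(star (x n)) ξ‖^2 ≤ ‖∑ n ∈ F, x n * star (x n)‖ * ‖ξ‖^2 := by
  rw [aux_inner_eq]
  calc RCLike.re ⟪(∑ n ∈ F, x n * star (x n)) ξ, ξ⟫
      ≤ ‖⟪(∑ n ∈ F, x n * star (x n)) ξ, ξ⟫‖ := RCLike.re_le_norm _
    _ ≤ ‖(∑ n ∈ F, x n * star (x n)) ξ‖ * ‖ξ‖ := norm_inner_le_norm _ _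
    _ ≤ (‖∑ n ∈ F, x n * star (x n)‖ * ‖ξ‖) * ‖ξ‖ := by
        gcongr; exact ContinuousLinearMap.le_opNorm _ _
    _ = ‖∑ n ∈ F, x n * star (x n)‖ * ‖ξ‖^2 := by ring


lemma aux_cs (a t : ℕ → H →L[ℂ] H) (F : Finset ℕ) :
    ‖∑ n ∈ F, a n * star (t n)‖ ≤
      Real.sqrt (‖∑ n ∈ F, a n * star (a n)‖ * ‖∑ n ∈ F, t n * star (t n)‖) := by
  set Ca := ‖∑ n ∈ F, a n * star (a n)‖ with hCa
  set Ct := ‖∑ n ∈ F, t n * star (t n)‖ with hCt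
  have hCa0 : 0 ≤ Ca := norm_nonneg _
  have hCt0 : 0 ≤ Ct := norm_nonneg _
  refine ContinuousLinearMap.opNorm_le_bound _ (Real.sqrt_nonneg _) fun ξ => ?_
  set T := ∑ n ∈ F, a n * star (t n) with hT
  set η := T ξ with hη
  have key : ‖η‖^2 ≤ Real.sqrt (Ca * Ct) * ‖ξ‖ * ‖η‖ := by
    have h0 : (‖η‖:ℝ)^2 = RCLike.re ⟪T ξ, η⟫ := by
      rw [← hη]; simp [inner_self_eq_norm_sq]
      rw [← Complex.ofReal_pow, Complex.ofReal_re]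
    have h1 : ⟪T ξ, η⟫ = ∑ n ∈ F, ⟪(star (t n)) ξ, (star (a n)) η⟫ := by
      rw [hT, ContinuousLinearMap.sum_apply, sum_inner]
      refine Finset.sum_congr rfl fun n _ => ?_
      rw [ContinuousLinearMap.mul_apply, ← ContinuousLinearMap.adjoint_inner_right,
        ← ContinuousLinearMap.star_eq_adjoint]
    have h2 : RCLike.re ⟪T ξ, η⟫ ≤ ∑ n ∈ F, ‖(star (t n)) ξ‖ * ‖(star (a n)) η‖ := by
      calc RCLike.re ⟪T ξ, η⟫ ≤ ‖⟪T ξ, η⟫‖ := RCLike.re_le_norm _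
        _ = ‖∑ n ∈ F, ⟪(star (t n)) ξ, (star (a n)) η⟫‖ := by rw [h1]
        _ ≤ ∑ n ∈ F, ‖⟪(star (t n)) ξ, (star (a n)) η⟫‖ := norm_sum_le _ _
        _ ≤ ∑ n ∈ F, ‖(star (t n)) ξ‖ * ‖(star (a n)) η‖ := by
            gcongr with n hn; exact norm_inner_le_norm _ _
    have h3 : (∑ n ∈ F, ‖(star (t n)) ξ‖ * ‖(star (a n)) η‖)
        ≤ Real.sqrt ((∑ n ∈ F, ‖(star (t n)) ξ‖^2) * (∑ n ∈ F, ‖(star (a n)) η‖^2)) := by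
      have h := Finset.sum_mul_sq_le_sq_mul_sq F
        (fun n => ‖(star (t n)) ξ‖) (fun n => ‖(star (a n)) η‖)
      have hnn : 0 ≤ ∑ n ∈ F, ‖(star (t n)) ξ‖ * ‖(star (a n)) η‖ :=
        Finset.sum_nonneg fun n _ => mul_nonneg (norm_nonneg _) (norm_nonneg _)
      calc (∑ n ∈ F, ‖(star (t n)) ξ‖ * ‖(star (a n)) η‖)
          = Real.sqrt ((∑ n ∈ F, ‖(star (t n)) ξ‖ * ‖(star (a n)) η‖)^2) :=
            (Real.sqrt_sq hnn).symm
        _ ≤ _ := Real.sqrt_le_sqrt h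
    have h4 : Real.sqrt ((∑ n ∈ F, ‖(star (t n)) ξ‖^2) * (∑ n ∈ F, ‖(star (a n)) η‖^2))
        ≤ Real.sqrt ((Ct * ‖ξ‖^2) * (Ca * ‖η‖^2)) := by
      apply Real.sqrt_le_sqrt
      have g1 := aux_sum_sq_le t F ξ
      have g2 := aux_sum_sq_le a F η
      have p1 : 0 ≤ ∑ n ∈ F, ‖(star (t n)) ξ‖^2 := Finset.sum_nonneg fun n _ => sq_nonneg _
      have p2 : 0 ≤ ∑ n ∈ F, ‖(star (a n)) η‖^2 := Finset.sum_nonneg fun n _ => sq_nonneg _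
      calc (∑ n ∈ F, ‖(star (t n)) ξ‖^2) * (∑ n ∈ F, ‖(star (a n)) η‖^2)
          ≤ (Ct * ‖ξ‖^2) * (∑ n ∈ F, ‖(star (a n)) η‖^2) := by
            apply mul_le_mul_of_nonneg_right g1 p2
        _ ≤ (Ct * ‖ξ‖^2) * (Ca * ‖η‖^2) := by
            apply mul_le_mul_of_nonneg_left g2 (by positivity)
    have h5 : Real.sqrt ((Ct * ‖ξ‖^2) * (Ca * ‖η‖^2))
        = Real.sqrt (Ca * Ct) * ‖ξ‖ * ‖η‖ := by
      rw [show (Ct * ‖ξ‖^2) * (Ca * ‖η‖^2) = (Ca * Ct) * (‖ξ‖^2 * ‖η‖^2) by ring,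
        Real.sqrt_mul (by positivity), Real.sqrt_mul (sq_nonneg _),
        Real.sqrt_sq (norm_nonneg _), Real.sqrt_sq (norm_nonneg _), mul_assoc]
    calc (‖η‖:ℝ)^2 = RCLike.re ⟪T ξ, η⟫ := h0
      _ ≤ _ := h2
      _ ≤ _ := h3
      _ ≤ _ := h4
      _ = _ := h5
  rcases eq_or_lt_of_le (norm_nonneg η) with h | h
  · rw [← h]; positivity
  · exact le_of_mul_le_mul_right (by rw [sq] at key; linarith) h

lemma aux_partial_le {x : ℕ → H →L[ℂ] H} {s : H →L[ℂ] H}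
    (h : Tendsto (fun N : ℕ => ∑ n ∈ Finset.range N, x n * star (x n)) atTop (𝓝 s)) (N : ℕ) :
    ∑ n ∈ Finset.range N, x n * star (x n) ≤ s := by
  rw [← sub_nonneg]
  have hmem : ∀ᶠ M in atTop, (∑ n ∈ Finset.range M, x n * star (x n))
      - ∑ n ∈ Finset.range N, x n * star (x n) ∈ {y : H →L[ℂ] H | 0 ≤ y} := by
    filter_upwards [eventually_ge_atTop N] with M hM
    show (0:H →L[ℂ] H) ≤ _
    rw [← Finset.sum_sdiff_eq_sub (Finset.range_subset_range.2 hM)]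
    exact aux_sum_nonneg x _
  exact CStarAlgebra.isClosed_nonneg.mem_of_tendsto (h.sub_const _) hmem

lemma aux_norm_le {x : ℕ → H →L[ℂ] H} {s : H →L[ℂ] H}
    (h : Tendsto (fun N : ℕ => ∑ n ∈ Finset.range N, x n * star (x n)) atTop (𝓝 s)) (N : ℕ) :
    ‖∑ n ∈ Finset.range N, x n * star (x n)‖ ≤ ‖s‖ :=
  CStarAlgebra.norm_le_norm_of_nonneg_of_le (aux_sum_nonneg x _) (aux_partial_le h N)

lemma aux_sup_norm {x : ℕ → H →L[ℂ] H} {s : H →L[ℂ] H}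
    (h : Tendsto (fun N : ℕ => ∑ n ∈ Finset.range N, x n * star (x n)) atTop (𝓝 s)) :
    (⨆ N : ℕ, ‖∑ n ∈ Finset.range N, x n * star (x n)‖) = ‖s‖ := by
  have hb : BddAbove (Set.range fun N : ℕ => ‖∑ n ∈ Finset.range N, x n * star (x n)‖) :=
    ⟨‖s‖, by rintro r ⟨N, rfl⟩; exact aux_norm_le h N⟩
  refine le_antisymm (ciSup_le fun N => aux_norm_le h N) ?_
  exact le_of_tendsto h.norm (Eventually.of_forall fun N => le_ciSup hb N)

lemma aux_l2norm_eq {x : ℕ → H →L[ℂ] H} {s : H →L[ℂ] H}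
    (h : Tendsto (fun N : ℕ => ∑ n ∈ Finset.range N, x n * star (x n)) atTop (𝓝 s)) :
    l2norm x = Real.sqrt ‖s‖ := by
  rw [l2norm, aux_sup_norm h]

lemma aux_conv {a t : ℕ → H →L[ℂ] H}
    (ha : CauchySeq (fun N : ℕ => ∑ n ∈ Finset.range N, a n * star (a n)))
    (ht : CauchySeq (fun N : ℕ => ∑ n ∈ Finset.range N, t n * star (t n))) :
    ∃ s : H →L[ℂ] H,
      Tendsto (fun N : ℕ => ∑ n ∈ Finset.range N, a n * star (t n)) atTop (𝓝 s) := by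
  apply cauchySeq_tendsto_of_complete
  rw [Metric.cauchySeq_iff] at ha ht ⊢
  intro ε hε
  obtain ⟨N₁, h₁⟩ := ha ε hε
  obtain ⟨N₂, h₂⟩ := ht ε hε
  refine ⟨max N₁ N₂, fun m hm n hn => ?_⟩
  -- wlog n ≤ m
  wlog hmn : n ≤ m generalizing m n
  · rw [dist_comm]; exact this n hn m hm (le_of_not_ge hmn)
  have key : dist (∑ k ∈ Finset.range m, a k * star (t k))
      (∑ k ∈ Finset.range n, a k * star (t k))
      ≤ Real.sqrt (dist (∑ k ∈ Finset.range m, a k * star (a k))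
          (∑ k ∈ Finset.range n, a k * star (a k)) *
        dist (∑ k ∈ Finset.range m, t k * star (t k))
          (∑ k ∈ Finset.range n, t k * star (t k))) := by
    rw [dist_eq_norm, dist_eq_norm, dist_eq_norm,
      ← Finset.sum_sdiff_eq_sub (Finset.range_subset_range.2 hmn),
      ← Finset.sum_sdiff_eq_sub (Finset.range_subset_range.2 hmn),
      ← Finset.sum_sdiff_eq_sub (Finset.range_subset_range.2 hmn)]
    exact aux_cs a t _
  have h1 := h₁ m (le_trans (le_max_left _ _) hm) n (le_trans (le_max_left _ _) hn)
  have h2 := h₂ m (le_trans (le_max_right _ _) hm) n (le_trans (le_max_right _ _) hn)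
  refine key.trans_lt ?_
  have hlt : dist (∑ k ∈ Finset.range m, a k * star (a k))
      (∑ k ∈ Finset.range n, a k * star (a k)) *
    dist (∑ k ∈ Finset.range m, t k * star (t k))
      (∑ k ∈ Finset.range n, t k * star (t k)) < ε * ε :=
    mul_lt_mul'' h1 h2 dist_nonneg dist_nonneg
  exact lt_of_lt_of_eq (Real.sqrt_lt_sqrt (mul_nonneg dist_nonneg dist_nonneg) hlt)
    (Real.sqrt_mul_self hε.le)

/-- the restriction of `φ((tₙ))((aₙ)) = ∑ aₙtₙ*` to the multiplier module
`M(ℓ²(A))` is an isometry onto the adjointable dual `ℓ²(A)* = B(ℓ²(A), A)`. -/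
theorem stmt_6 (A : StarSubalgebra ℂ (H →L[ℂ] H))
    (hA : IsClosed (A : Set (H →L[ℂ] H)))
    (hnd : Nondegenerate (A : Set (H →L[ℂ] H))) :
    -- every `(tₙ) ∈ M(ℓ²(A))` induces a well-defined adjointable map `ℓ²(A) → A`,
    -- isometrically
    (∀ t : ℕ → H →L[ℂ] H, MemMultMod (A : Set (H →L[ℂ] H)) t →
      (∀ a, MemL2 (A : Set (H →L[ℂ] H)) a →
        ∃ s : H →L[ℂ] H,
          Tendsto (fun N : ℕ => ∑ n ∈ Finset.range N, a n * star (t n)) atTop (𝓝 s)) ∧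
      ∀ L : (ℕ → H →L[ℂ] H) → (H →L[ℂ] H),
        (∀ a, MemL2 (A : Set (H →L[ℂ] H)) a →
          Tendsto (fun N : ℕ => ∑ n ∈ Finset.range N, a n * star (t n)) atTop (𝓝 (L a))) →
        -- `L` is adjointable, with adjoint `R : A → ℓ²(A)`
        (∃ R : (H →L[ℂ] H) → (ℕ → H →L[ℂ] H),
          (∀ b ∈ (A : Set (H →L[ℂ] H)), MemL2 (A : Set (H →L[ℂ] H)) (R b)) ∧
          ∀ a, MemL2 (A : Set (H →L[ℂ] H)) a → ∀ b ∈ (A : Set (H →L[ℂ] H)),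
            Tendsto (fun N : ℕ => ∑ n ∈ Finset.range N, a n * star (R b n)) atTop
              (𝓝 (L a * star b))) ∧
        -- isometry: `‖L‖ = ‖(tₙ)‖`
        sSup {r : ℝ | ∃ a, MemL2 (A : Set (H →L[ℂ] H)) a ∧ l2norm a ≤ 1 ∧ r = ‖L a‖}
          = l2norm t)
    ∧
    -- surjectivity: every adjointable bounded module map `ℓ²(A) → A` arises this way
    (∀ L : (ℕ → H →L[ℂ] H) → (H →L[ℂ] H),
      (∀ a, MemL2 (A : Set (H →L[ℂ] H)) a → L a ∈ A) →
      (∀ a b, MemL2 (A : Set (H →L[ℂ] H)) a → MemL2 (A : Set (H →L[ℂ] H)) b →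
        L (a + b) = L a + L b) →
      (∀ c ∈ (A : Set (H →L[ℂ] H)), ∀ a, MemL2 (A : Set (H →L[ℂ] H)) a →
        L (fun n => c * a n) = c * L a) →
      (∃ C : ℝ, ∀ a, MemL2 (A : Set (H →L[ℂ] H)) a → ‖L a‖ ≤ C * l2norm a) →
      (∃ R : (H →L[ℂ] H) → (ℕ → H →L[ℂ] H),
        (∀ b ∈ (A : Set (H →L[ℂ] H)), MemL2 (A : Set (H →L[ℂ] H)) (R b)) ∧
        ∀ a, MemL2 (A : Set (H →L[ℂ] H)) a → ∀ b ∈ (A : Set (H →L[ℂ] H)),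
          Tendsto (fun N : ℕ => ∑ n ∈ Finset.range N, a n * star (R b n)) atTop
            (𝓝 (L a * star b))) →
      ∃ t : ℕ → H →L[ℂ] H, MemMultMod (A : Set (H →L[ℂ] H)) t ∧
        ∀ a, MemL2 (A : Set (H →L[ℂ] H)) a →
          Tendsto (fun N : ℕ => ∑ n ∈ Finset.range N, a n * star (t n)) atTop (𝓝 (L a))) := by

  have hone : (1 : H →L[ℂ] H) ∈ (A : Set (H →L[ℂ] H)) := one_mem A
  have hsum_conj : ∀ (b : H →L[ℂ] H) (t : ℕ → H →L[ℂ] H) (N : ℕ),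
      ∑ n ∈ Finset.range N, (b * t n) * star (b * t n)
        = b * (∑ n ∈ Finset.range N, t n * star (t n)) * star b := by
    intro b t N
    rw [Finset.mul_sum, Finset.sum_mul]
    refine Finset.sum_congr rfl fun n _ => ?_
    rw [star_mul]; noncomm_ring
  have hsum_pair : ∀ (a : ℕ → H →L[ℂ] H) (b : H →L[ℂ] H) (t : ℕ → H →L[ℂ] H) (N : ℕ),
      ∑ n ∈ Finset.range N, a n * star (b * t n)
        = (∑ n ∈ Finset.range N, a n * star (t n)) * star b := by
    intro a b t N
    rw [Finset.sum_mul]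
    refine Finset.sum_congr rfl fun n _ => ?_
    rw [star_mul]; noncomm_ring
  constructor
  · intro t ht
    have htA : ∀ n, t n ∈ (A : Set (H →L[ℂ] H)) := fun n => by
      have := (ht.1 n).1 1 hone
      simpa using this
    obtain ⟨s, hs1, _⟩ := ht.2
    have hs : Tendsto (fun N : ℕ => ∑ n ∈ Finset.range N, t n * star (t n)) atTop (𝓝 s) := by
      have := hs1 1 hone
      simpa using this
    constructor
    · intro a ha
      obtain ⟨_, sa, hsa⟩ := ha
      exact aux_conv hsa.cauchySeq hs.cauchySeq
    · intro L hL
      have l2t : l2norm t = Real.sqrt ‖s‖ := aux_l2norm_eq hs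
      constructor
      · -- adjointability
        refine ⟨fun b n => b * t n, fun b hb => ⟨fun n => mul_mem hb (htA n), ?_⟩, ?_⟩
        · refine ⟨b * s * star b, ?_⟩
          have hconv : Tendsto (fun N : ℕ =>
              b * (∑ n ∈ Finset.range N, t n * star (t n)) * star b) atTop
              (𝓝 (b * s * star b)) :=
            (tendsto_const_nhds.mul hs).mul tendsto_const_nhds
          simpa only [hsum_conj b t] using hconv
        · intro a ha b hb
          have hconv : Tendsto (fun N : ℕ =>
              (∑ n ∈ Finset.range N, a n * star (t n)) * star b) atTop
              (𝓝 (L a * star b)) := (hL a ha).mul tendsto_const_nhds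
          simpa only [hsum_pair a b t] using hconv
      · -- isometry
        have hzmem : MemL2 (A : Set (H →L[ℂ] H)) (fun _ => 0) := by
          refine ⟨fun _ => zero_mem A, 0, ?_⟩
          simpa using (tendsto_const_nhds : Tendsto (fun _ : ℕ => (0 : H →L[ℂ] H)) atTop (𝓝 0))
        have hz2 : l2norm (fun _ : ℕ => (0 : H →L[ℂ] H)) = 0 := by
          have : Tendsto (fun N : ℕ =>
              ∑ n ∈ Finset.range N, (0 : H →L[ℂ] H) * star (0 : H →L[ℂ] H)) atTop (𝓝 0) := by
            simpa using (tendsto_const_nhds : Tendsto (fun _ : ℕ => (0 : H →L[ℂ] H)) atTop (𝓝 0))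
          rw [aux_l2norm_eq this, norm_zero, Real.sqrt_zero]
        have hL0 : L (fun _ => 0) = 0 := by
          have h1 := hL (fun _ => 0) hzmem
          have h2 : Tendsto (fun N : ℕ =>
              ∑ n ∈ Finset.range N, (0 : H →L[ℂ] H) * star (t n)) atTop (𝓝 0) := by
            simpa using (tendsto_const_nhds : Tendsto (fun _ : ℕ => (0 : H →L[ℂ] H)) atTop (𝓝 0))
          exact tendsto_nhds_unique h1 h2
        have h0S : (0 : ℝ) ∈ {r : ℝ | ∃ a, MemL2 (A : Set (H →L[ℂ] H)) a ∧ l2norm a ≤ 1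
            ∧ r = ‖L a‖} := ⟨fun _ => 0, hzmem, by rw [hz2]; norm_num, by rw [hL0, norm_zero]⟩
        have hub : ∀ r ∈ {r : ℝ | ∃ a, MemL2 (A : Set (H →L[ℂ] H)) a ∧ l2norm a ≤ 1
            ∧ r = ‖L a‖}, r ≤ Real.sqrt ‖s‖ := by
          rintro r ⟨a, ⟨haA, sa, hsa⟩, hna, rfl⟩
          have hQ := hL a ⟨haA, sa, hsa⟩
          have hbound : ∀ N : ℕ, ‖∑ n ∈ Finset.range N, a n * star (t n)‖
              ≤ Real.sqrt ‖sa‖ * Real.sqrt ‖s‖ := by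
            intro N
            refine (aux_cs a t (Finset.range N)).trans ?_
            rw [← Real.sqrt_mul (norm_nonneg _)]
            exact Real.sqrt_le_sqrt (mul_le_mul (aux_norm_le hsa N) (aux_norm_le hs N)
              (norm_nonneg _) (norm_nonneg _))
          have hLa : ‖L a‖ ≤ Real.sqrt ‖sa‖ * Real.sqrt ‖s‖ :=
            le_of_tendsto hQ.norm (Eventually.of_forall hbound)
          have hla : l2norm a = Real.sqrt ‖sa‖ := aux_l2norm_eq hsa
          calc ‖L a‖ ≤ Real.sqrt ‖sa‖ * Real.sqrt ‖s‖ := hLa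
            _ ≤ 1 * Real.sqrt ‖s‖ := by
                apply mul_le_mul_of_nonneg_right _ (Real.sqrt_nonneg _)
                rw [← hla]; exact hna
            _ = Real.sqrt ‖s‖ := one_mul _
        have hbddS : BddAbove {r : ℝ | ∃ a, MemL2 (A : Set (H →L[ℂ] H)) a ∧ l2norm a ≤ 1
            ∧ r = ‖L a‖} := ⟨Real.sqrt ‖s‖, hub⟩
        rw [l2t]
        refine le_antisymm (csSup_le ⟨0, h0S⟩ hub) ?_
        by_cases hs0 : ‖s‖ = 0
        · rw [hs0, Real.sqrt_zero]
          exact le_csSup hbddS h0S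
        · have hsn : 0 < ‖s‖ := lt_of_le_of_ne (norm_nonneg s) (Ne.symm hs0)
          have hrs : 0 < Real.sqrt ‖s‖ := Real.sqrt_pos.2 hsn
          set c : ℝ := (Real.sqrt ‖s‖)⁻¹ with hc
          have hc0 : 0 < c := inv_pos.2 hrs
          set a : ℕ → H →L[ℂ] H := fun n => (c : ℂ) • t n with ha_def
          have hstar : ∀ n, star (a n) = (c : ℂ) • star (t n) := fun n => by
            rw [ha_def]; simp [star_smul, Complex.conj_ofReal]
          have hsum1 : ∀ N : ℕ, ∑ n ∈ Finset.range N, a n * star (a n)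
              = ((c : ℂ) * (c : ℂ)) • ∑ n ∈ Finset.range N, t n * star (t n) := by
            intro N
            rw [Finset.smul_sum]
            refine Finset.sum_congr rfl fun n _ => ?_
            rw [hstar, ha_def, smul_mul_smul_comm]
          have hconv1 : Tendsto (fun N : ℕ => ∑ n ∈ Finset.range N, a n * star (a n))
              atTop (𝓝 (((c : ℂ) * (c : ℂ)) • s)) := by
            simp only [hsum1]
            exact hs.const_smul _
          have haL2 : MemL2 (A : Set (H →L[ℂ] H)) a :=
            ⟨fun n => SMulMemClass.smul_mem _ (htA n), _, hconv1⟩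
          have hconv2 : Tendsto (fun N : ℕ => ∑ n ∈ Finset.range N, a n * star (t n))
              atTop (𝓝 ((c : ℂ) • s)) := by
            have : ∀ N : ℕ, ∑ n ∈ Finset.range N, a n * star (t n)
                = (c : ℂ) • ∑ n ∈ Finset.range N, t n * star (t n) := by
              intro N
              rw [Finset.smul_sum]
              exact Finset.sum_congr rfl fun n _ => by rw [ha_def, smul_mul_assoc]
            simp only [this]
            exact hs.const_smul _
          have hLa : L a = (c : ℂ) • s := tendsto_nhds_unique (hL a haL2) hconv2
          have hnorm_c : ‖(c : ℂ)‖ = c := by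
            rw [Complex.norm_real, Real.norm_of_nonneg hc0.le]
          have hLa_norm : ‖L a‖ = Real.sqrt ‖s‖ := by
            rw [hLa, norm_smul, hnorm_c, hc, inv_mul_eq_div, div_eq_iff hrs.ne']
            exact (Real.mul_self_sqrt (norm_nonneg s)).symm
          have hla1 : l2norm a ≤ 1 := by
            have h1 : ‖((c : ℂ) * (c : ℂ)) • s‖ = c * c * ‖s‖ := by
              rw [norm_smul, norm_mul, hnorm_c]
            have h2 : c * c * ‖s‖ = 1 := by
              rw [hc]
              field_simp
              rw [Real.sq_sqrt (norm_nonneg _)]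
            rw [aux_l2norm_eq hconv1, h1, h2, Real.sqrt_one]
          refine le_csSup hbddS ⟨a, haL2, hla1, hLa_norm.symm⟩
  · rintro L hmem hadd hmulc hbdd ⟨R, hRL2, hR⟩
    obtain ⟨hR1A, s, hs⟩ := hRL2 1 hone
    refine ⟨R 1, ⟨fun n => ⟨fun b hb => mul_mem (hR1A n) hb, fun b hb => mul_mem hb (hR1A n)⟩,
      s, fun b _ => hs.mul tendsto_const_nhds, fun b _ => tendsto_const_nhds.mul hs⟩, ?_⟩
    intro a ha
    have := hR a ha 1 hone
    simpa using this
end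
end

section
/- For every a > 0 the map U_a : L_a^∞(ℓ²) → ℓ²_{ℤ,strong}(L^∞[0,a]), U_a f = (T_{-na} f · χ_{[0,a]})_{n∈ℤ}, is a unitary operator of Hilbert L^∞[0,a]-modules; consequently L_a^∞(ℓ²) is a self-dual Hilbert C*-module over L^∞[0,a] with inner product ⟨f,g⟩(x) = ∑_{n∈ℤ} f(x−na)·conj(g(x−na)). -/
open Filter Topology MeasureTheory

noncomputable section

/-- Lebesgue measure restricted to `[0,a]` (the measure underlying `L^∞[0,a]`). -/
def μres (a : ℝ) : Measure ℝ := volume.restrict (Set.Icc 0 a)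

/-- Membership in `L_a^∞(ℓ²)`: `f` is measurable and
`esssup_{x∈[0,a]} ∑_{n∈ℤ} |f(x−na)|² < ∞` (expressed via partial sums). -/
def MemLainf (a : ℝ) (f : ℝ → ℂ) : Prop :=
  Measurable f ∧ ∃ C : ℝ, ∀ᵐ x ∂(μres a),
    ∀ s : Finset ℤ, ∑ n ∈ s, ‖f (x - (n : ℝ) * a)‖ ^ 2 ≤ C

/-- A representative of an element of `L^∞[0,a]`: measurable and essentially bounded. -/
def EssBdd (a : ℝ) (h : ℝ → ℂ) : Prop :=
  Measurable h ∧ ∃ C : ℝ, ∀ᵐ x ∂(μres a), ‖h x‖ ≤ C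

/-- The `a`-periodic extension `h^a` of a function on `[0,a]`. -/
def per (a : ℝ) (h : ℝ → ℂ) (x : ℝ) : ℂ := h (x - a * (⌊x / a⌋ : ℤ))

/-- The squared norm of `f` in `L_a^∞(ℓ²)`, as an infimum of essential bounds. -/
def LainfBound (a : ℝ) (f : ℝ → ℂ) : ℝ :=
  sInf {C : ℝ | ∀ᵐ x ∂(μres a), ∀ s : Finset ℤ, ∑ n ∈ s, ‖f (x - (n : ℝ) * a)‖ ^ 2 ≤ C}

open scoped NNReal ENNReal

section Aux
variable {a : ℝ}

lemma floor_shift (ha : 0 < a) {x : ℝ} (hx : x ∈ Set.Ico 0 a) (n : ℤ) :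
    ⌊(x + (n : ℝ) * a) / a⌋ = n := by
  have hane : a ≠ 0 := ne_of_gt ha
  have h1 : (x + (n : ℝ) * a) / a = x / a + n := by field_simp
  have h0 : ⌊x / a⌋ = 0 := by
    rw [Int.floor_eq_zero_iff]
    constructor
    · exact div_nonneg hx.1 ha.le
    · rw [div_lt_one ha]; exact hx.2
  rw [h1, Int.floor_add_intCast, h0, zero_add]

def glue (a : ℝ) (F : ℤ → ℝ → ℂ) (x : ℝ) : ℂ := F ⌊x / a⌋ (x - a * ⌊x / a⌋)

lemma glue_shift (ha : 0 < a) {x : ℝ} (hx : x ∈ Set.Ico 0 a) (F : ℤ → ℝ → ℂ) (n : ℤ) :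
    glue a F (x + (n : ℝ) * a) = F n x := by
  unfold glue
  rw [floor_shift ha hx n]
  ring_nf

lemma measurable_glue {F : ℤ → ℝ → ℂ} (hF : ∀ n, Measurable (F n)) :
    Measurable (glue a F) := by
  have h1 : Measurable fun p : ℝ × ℤ => F p.2 p.1 :=
    measurable_from_prod_countable_left fun n => hF n
  have h2 : Measurable fun x : ℝ => ⌊x / a⌋ :=
    Int.measurable_floor.comp (measurable_id.div_const a)
  have h2' : Measurable fun x : ℝ => ((⌊x / a⌋ : ℤ) : ℝ) := (measurable_of_countable (fun n : ℤ => (n : ℝ))).comp h2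
  have h3 : Measurable fun x : ℝ => (x - a * ⌊x / a⌋, ⌊x / a⌋) :=
    Measurable.prod (measurable_id.sub (measurable_const.mul h2')) h2
  exact h1.comp h3

lemma ae_Ico (ha : 0 < a) : ∀ᵐ x ∂(μres a), x ∈ Set.Ico 0 a := by
  rw [ae_iff]
  unfold μres
  rw [Measure.restrict_apply' measurableSet_Icc]
  refine measure_mono_null (fun x hx => ?_) (measure_singleton a)
  simp only [Set.mem_inter_iff, Set.mem_setOf_eq, Set.mem_Icc, Set.mem_Ico] at hx ⊢
  rcases hx with ⟨h1, h2, h3⟩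
  push_neg at h1
  exact le_antisymm h3 (h1 h2)

lemma mures_ne_zero (ha : 0 < a) : μres a ≠ 0 := by
  unfold μres
  intro h
  have := congrArg (fun μ : Measure ℝ => μ Set.univ) h
  simp [Real.volume_Icc] at this
  linarith

instance : Countable (Finset ℤ) := inferInstance
def InBd (a : ℝ) (f : ℝ → ℂ) (C : ℝ) : Prop :=
  ∀ᵐ x ∂(μres a), ∀ s : Finset ℤ, ∑ n ∈ s, ‖f (x - (n : ℝ) * a)‖ ^ 2 ≤ C

lemma bd_nonneg (ha : 0 < a) {f : ℝ → ℂ} {C : ℝ} (h : InBd a f C) : 0 ≤ C := by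
  have : NeBot (ae (μres a)) := ae_neBot.mpr (mures_ne_zero ha)
  obtain ⟨x, hx⟩ := h.exists
  simpa using hx ∅

lemma LB_le (ha : 0 < a) {f : ℝ → ℂ} {C : ℝ} (h : InBd a f C) : LainfBound a f ≤ C :=
  csInf_le ⟨0, fun _ hy => bd_nonneg ha hy⟩ h

lemma LB_nonneg (ha : 0 < a) {f : ℝ → ℂ} (hf : ∃ C, InBd a f C) : 0 ≤ LainfBound a f := by
  obtain ⟨C, hC⟩ := hf
  exact le_csInf ⟨C, hC⟩ fun _ hy => bd_nonneg ha hy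

-- dominated membership
lemma memLainf_of_dominated {f g : ℝ → ℂ} (hf : MemLainf a f) (hg : Measurable g)
    (hdom : ∀ y, ‖g y‖ ≤ ‖f y‖) : MemLainf a g := by
  obtain ⟨hfm, C, hC⟩ := hf
  refine ⟨hg, C, hC.mono fun x hx s => le_trans (Finset.sum_le_sum fun n _ => ?_) (hx s)⟩
  have := hdom (x - (n : ℝ) * a)
  exact pow_le_pow_left₀ (norm_nonneg _) this 2
lemma part3' (ha : 0 < a) (F : ℤ → ℝ → ℂ) (hFm : ∀ n, Measurable (F n))
    (hFb : ∃ C : ℝ, ∀ᵐ x ∂(μres a), ∀ s : Finset ℤ, ∑ n ∈ s, ‖F n x‖ ^ 2 ≤ C) :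
    MemLainf a (glue a F) ∧
      ∀ n : ℤ, (fun x => glue a F (x + (n : ℝ) * a)) =ᵐ[μres a] F n := by
  obtain ⟨C, hC⟩ := hFb
  refine ⟨⟨measurable_glue hFm, C, ?_⟩, fun n => ?_⟩
  · filter_upwards [hC, ae_Ico ha] with x hx hxI s
    have key : ∀ n : ℤ, glue a F (x - (n : ℝ) * a) = F (-n) x := fun n => by
      have : x - (n : ℝ) * a = x + ((-n : ℤ) : ℝ) * a := by push_cast; ring
      rw [this, glue_shift ha hxI]
    calc ∑ n ∈ s, ‖glue a F (x - (n : ℝ) * a)‖ ^ 2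
        = ∑ n ∈ s, ‖F (-n) x‖ ^ 2 := by
          exact Finset.sum_congr rfl fun n _ => by rw [key]
      _ = ∑ m ∈ s.image (fun n : ℤ => -n), ‖F m x‖ ^ 2 := by
          rw [Finset.sum_image (fun x _ y _ h => neg_injective h)]
      _ ≤ C := hx _
  · filter_upwards [ae_Ico ha] with x hxI
    exact glue_shift ha hxI F n

lemma part3 (ha : 0 < a) (F : ℤ → ℝ → ℂ) (hFm : ∀ n, Measurable (F n))
    (hFb : ∃ C : ℝ, ∀ᵐ x ∂(μres a), ∀ s : Finset ℤ, ∑ n ∈ s, ‖F n x‖ ^ 2 ≤ C) :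
    ∃ f : ℝ → ℂ, MemLainf a f ∧
      ∀ n : ℤ, (fun x => f (x + (n : ℝ) * a)) =ᵐ[μres a] F n :=
  ⟨glue a F, (part3' ha F hFm hFb).1, (part3' ha F hFm hFb).2⟩
lemma part2 (ha : 0 < a) (f g : ℝ → ℂ)
    (h : ∀ n : ℤ, (fun x => f (x + (n : ℝ) * a)) =ᵐ[μres a] fun x => g (x + (n : ℝ) * a)) :
    f =ᵐ[volume] g := by
  rw [Filter.EventuallyEq, ae_iff]
  set S : Set ℝ := {x | ¬ f x = g x} with hS
  have hcover : S ⊆ ⋃ n : ℤ, S ∩ Set.Icc ((n : ℝ) * a) ((n : ℝ) * a + a) := by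
    intro x hx
    refine Set.mem_iUnion.2 ⟨⌊x / a⌋, hx, ?_, ?_⟩
    · calc ((⌊x / a⌋ : ℝ)) * a ≤ (x / a) * a := by
            exact mul_le_mul_of_nonneg_right (Int.floor_le _) ha.le
        _ = x := by field_simp
    · have h1 : x / a < ⌊x / a⌋ + 1 := Int.lt_floor_add_one _
      have := mul_lt_mul_of_pos_right h1 ha
      rw [div_mul_cancel₀ _ (ne_of_gt ha)] at this
      linarith [this]
  refine measure_mono_null hcover (measure_iUnion_null fun n => ?_)
  have hiden : S ∩ Set.Icc ((n : ℝ) * a) ((n : ℝ) * a + a)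
      = (fun z => z + (-(n : ℝ) * a)) ⁻¹' ({x | ¬ f (x + (n : ℝ) * a) = g (x + (n : ℝ) * a)} ∩ Set.Icc 0 a) := by
    ext z
    simp only [Set.mem_inter_iff, Set.mem_preimage, Set.mem_setOf_eq, Set.mem_Icc, hS]
    constructor
    · rintro ⟨h1, h2, h3⟩
      refine ⟨by simpa [show z + -(n:ℝ)*a + (n:ℝ)*a = z by ring] using h1, by linarith, by linarith⟩
    · rintro ⟨h1, h2, h3⟩
      refine ⟨by simpa [show z + -(n:ℝ)*a + (n:ℝ)*a = z by ring] using h1, by linarith, by linarith⟩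
  rw [hiden, measure_preimage_add_right]
  have := (h n)
  rw [Filter.EventuallyEq, ae_iff] at this
  unfold μres at this
  rwa [Measure.restrict_apply' measurableSet_Icc] at this
lemma part1 (f g : ℝ → ℂ) (x : ℝ) :
    (∑' n : ℤ, (fun y => f (y + (n : ℝ) * a)) x *
        (starRingEnd ℂ) ((fun y => g (y + (n : ℝ) * a)) x))
      = ∑' n : ℤ, f (x - (n : ℝ) * a) * (starRingEnd ℂ) (g (x - (n : ℝ) * a)) := by
  have := (Equiv.neg ℤ).tsum_eq (fun n : ℤ => f (x - (n : ℝ) * a) * (starRingEnd ℂ) (g (x - (n : ℝ) * a)))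
  rw [← this]
  refine tsum_congr fun n => ?_
  have harg : x - ((Equiv.neg ℤ) n : ℝ) * a = x + (n : ℝ) * a := by
    simp only [Equiv.neg_apply]; push_cast; ring
  simp only [harg]

/-- the block indicator `e m` -/
def eblk (a : ℝ) (m : ℤ) : ℝ → ℂ := fun x => if ⌊x / a⌋ = m then 1 else 0

lemma measurable_eblk (m : ℤ) : Measurable (eblk a m) := by
  unfold eblk
  have h2 : Measurable fun x : ℝ => ⌊x / a⌋ :=
    Int.measurable_floor.comp (measurable_id.div_const a)
  exact Measurable.ite (h2 (measurableSet_singleton m)) measurable_const measurable_const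

lemma norm_eblk_le (m : ℤ) (x : ℝ) : ‖eblk a m x‖ ≤ 1 := by
  unfold eblk; split <;> simp

lemma sum_eblk (s : Finset ℤ) (x : ℝ) :
    ∑ m ∈ s, eblk a m x = if ⌊x / a⌋ ∈ s then 1 else 0 :=
  Finset.sum_ite_eq s ⌊x / a⌋ (fun _ => 1)

lemma floor_shift' (ha : 0 < a) {x : ℝ} (hx : x ∈ Set.Ico 0 a) (n : ℤ) :
    ⌊(x - (n : ℝ) * a) / a⌋ = -n := by
  have : x - (n : ℝ) * a = x + ((-n : ℤ) : ℝ) * a := by push_cast; ring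
  rw [this, floor_shift ha hx]

lemma per_shift (ha : 0 < a) {x : ℝ} (hx : x ∈ Set.Ico 0 a) (h : ℝ → ℂ) (n : ℤ) :
    per a h (x + (n : ℝ) * a) = h x := by
  unfold per
  rw [floor_shift ha hx n]
  ring_nf

lemma per_shift' (ha : 0 < a) {x : ℝ} (hx : x ∈ Set.Ico 0 a) (h : ℝ → ℂ) (n : ℤ) :
    per a h (x - (n : ℝ) * a) = h x := by
  have : x - (n : ℝ) * a = x + ((-n : ℤ) : ℝ) * a := by push_cast; ring
  rw [this, per_shift ha hx]

lemma measurable_per {h : ℝ → ℂ} (hh : Measurable h) : Measurable (per a h) := by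
  unfold per
  have h2 : Measurable fun x : ℝ => ⌊x / a⌋ :=
    Int.measurable_floor.comp (measurable_id.div_const a)
  have h2' : Measurable fun x : ℝ => ((⌊x / a⌋ : ℤ) : ℝ) :=
    (measurable_of_countable (fun n : ℤ => (n : ℝ))).comp h2
  exact hh.comp (measurable_id.sub (measurable_const.mul h2'))

lemma memLainf_eblk (ha : 0 < a) (m : ℤ) : MemLainf a (eblk a m) := by
  refine ⟨measurable_eblk m, 1, Filter.Eventually.of_forall fun x s => ?_⟩
  have key : ∀ n : ℤ, ‖eblk a m (x - (n : ℝ) * a)‖ ^ 2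
      = if ⌊x / a⌋ - m = n then 1 else 0 := by
    intro n
    unfold eblk
    have harg : (x - (n : ℝ) * a) / a = x / a - n := by
      have : a ≠ 0 := ne_of_gt ha
      field_simp
    rw [harg, Int.floor_sub_intCast]
    by_cases hc : ⌊x / a⌋ - n = m
    · rw [if_pos hc, if_pos (by omega)]; simp
    · rw [if_neg hc, if_neg (by omega)]; simp
  calc ∑ n ∈ s, ‖eblk a m (x - (n : ℝ) * a)‖ ^ 2
      = ∑ n ∈ s, if ⌊x / a⌋ - m = n then 1 else 0 :=
        Finset.sum_congr rfl fun n _ => key n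
    _ = if ⌊x / a⌋ - m ∈ s then 1 else 0 := Finset.sum_ite_eq s _ (fun _ => 1)
    _ ≤ 1 := by split <;> norm_num

/-- helper: sums of nonneg functions vanishing outside `s` are dominated by the sum over `s`. -/
lemma sum_le_of_support (s t : Finset ℤ) {v : ℤ → ℝ} (hv : ∀ m, 0 ≤ v m)
    (h0 : ∀ m, m ∉ s → v m = 0) : ∑ m ∈ t, v m ≤ ∑ m ∈ s, v m := by
  have h1 : ∑ m ∈ t, v m = ∑ m ∈ t ∩ s, v m := by
    refine (Finset.sum_subset (Finset.inter_subset_left) fun x hx hx' => ?_).symm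
    exact h0 x (fun hs => hx' (Finset.mem_inter.2 ⟨hx, hs⟩))
  rw [h1]
  exact Finset.sum_le_sum_of_subset_of_nonneg (Finset.inter_subset_right)
    (fun m _ _ => hv m)

lemma summable_sq_of_bdd {v : ℤ → ℂ} {B : ℝ}
    (hb : ∀ u : Finset ℤ, ∑ m ∈ u, ‖v m‖ ^ 2 ≤ B) :
    Summable fun m => ‖v m‖ ^ 2 := by
  have h1 : (∑' m : ℤ, ((‖v m‖₊ ^ 2 : ℝ≥0) : ℝ≥0∞)) ≠ ⊤ := by
    rw [ENNReal.tsum_eq_iSup_sum]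
    refine ne_top_of_le_ne_top (@ENNReal.ofReal_ne_top B) (iSup_le fun u => ?_)
    have : ∑ m ∈ u, ((‖v m‖₊ ^ 2 : ℝ≥0) : ℝ≥0∞) = ENNReal.ofReal (∑ m ∈ u, ‖v m‖ ^ 2) := by
      rw [ENNReal.ofReal_sum_of_nonneg (fun m _ => by positivity)]
      refine Finset.sum_congr rfl fun m _ => ?_
      rw [ENNReal.ofReal_pow (norm_nonneg _), ofReal_norm, enorm_eq_nnnorm, ENNReal.coe_pow]
    rw [this]
    exact ENNReal.ofReal_le_ofReal (hb u)
  have h2 := ENNReal.tsum_coe_ne_top_iff_summable.mp h1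
  have h3 := NNReal.summable_coe.mpr h2
  have h4 : (fun m : ℤ => ((‖v m‖₊ ^ 2 : ℝ≥0) : ℝ)) = fun m => ‖v m‖ ^ 2 := by
    funext m; push_cast; rfl
  rwa [h4] at h3

lemma summable_mul_of_sq {v w : ℤ → ℂ} (hv : Summable fun m => ‖v m‖ ^ 2)
    (hw : Summable fun m => ‖w m‖ ^ 2) : Summable fun m => v m * w m := by
  refine Summable.of_norm (Summable.of_nonneg_of_le (fun m => norm_nonneg _)
    (fun m => ?_) (((hv.add hw).div_const 2)))
  rw [norm_mul]
  nlinarith [sq_nonneg (‖v m‖ - ‖w m‖), norm_nonneg (v m), norm_nonneg (w m)]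
lemma norm_one_sub_sum_eblk (s : Finset ℤ) (y : ℝ) :
    ‖(1 : ℂ) - ∑ m ∈ s, eblk a m y‖ ≤ 1 := by
  rw [sum_eblk]
  split <;> simp

lemma ofReal_sum_sq (u : Finset ℤ) (v : ℤ → ℂ) :
    ENNReal.ofReal (∑ m ∈ u, ‖v m‖ ^ 2) = ∑ m ∈ u, (‖v m‖₊ : ℝ≥0∞) ^ 2 := by
  rw [ENNReal.ofReal_sum_of_nonneg (fun m _ => by positivity)]
  refine Finset.sum_congr rfl fun m _ => ?_
  rw [ENNReal.ofReal_pow (norm_nonneg _), ofReal_norm, enorm_eq_nnnorm]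

lemma part4 (ha : 0 < a) (Φ : (ℝ → ℂ) → (ℝ → ℂ))
    (hΦ1 : ∀ f, MemLainf a f → EssBdd a (Φ f))
    (hΦ2 : ∀ f g, MemLainf a f → MemLainf a g → Φ (f + g) =ᵐ[μres a] Φ f + Φ g)
    (hΦ3 : ∀ h, EssBdd a h → ∀ f, MemLainf a f →
      Φ (fun x => per a h x * f x) =ᵐ[μres a] fun x => h x * Φ f x)
    (hΦ4 : ∃ C : ℝ, ∀ f, MemLainf a f →
      ∀ᵐ x ∂(μres a), ‖Φ f x‖ ≤ C * Real.sqrt (LainfBound a f)) :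
    ∃ g : ℝ → ℂ, MemLainf a g ∧
      ∀ f, MemLainf a f →
        Φ f =ᵐ[μres a]
          fun x => ∑' n : ℤ, f (x - (n : ℝ) * a) *
            (starRingEnd ℂ) (g (x - (n : ℝ) * a)) := by
  obtain ⟨C, hC⟩ := hΦ4
  set C₀ := |C| with hC₀def
  have hC₀nn : 0 ≤ C₀ := abs_nonneg C
  have hC₀ : ∀ f, MemLainf a f →
      ∀ᵐ x ∂(μres a), ‖Φ f x‖ ≤ C₀ * Real.sqrt (LainfBound a f) := by
    intro f hf
    filter_upwards [hC f hf] with x hx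
    exact hx.trans (mul_le_mul_of_nonneg_right (le_abs_self C) (Real.sqrt_nonneg _))
  set φ : ℤ → ℝ → ℂ := fun m => Φ (eblk a m) with hφdef
  have hφEB : ∀ m, EssBdd a (φ m) := fun m => hΦ1 _ (memLainf_eblk ha m)
  have hφm : ∀ m, Measurable (φ m) := fun m => (hφEB m).1
  -- Φ 0 = 0 a.e.
  have h0Mem : MemLainf a (0 : ℝ → ℂ) :=
    ⟨measurable_const, 0, Filter.Eventually.of_forall fun x s => by simp⟩
  have hΦ0 : Φ 0 =ᵐ[μres a] 0 := by
    have h := hΦ2 0 0 h0Mem h0Mem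
    rw [add_zero] at h
    filter_upwards [h] with x hx
    simp only [Pi.add_apply, Pi.zero_apply] at hx ⊢
    linear_combination -hx
  -- membership lemmas
  have hMulMem : ∀ f, MemLainf a f → ∀ m : ℤ, MemLainf a (fun y => f y * eblk a m y) := by
    intro f hf m
    refine memLainf_of_dominated hf (hf.1.mul (measurable_eblk m)) fun y => ?_
    rw [norm_mul]
    exact mul_le_of_le_one_right (norm_nonneg _) (norm_eblk_le m y)
  have hPartMem : ∀ f, MemLainf a f → ∀ s : Finset ℤ,
      MemLainf a (fun y => ∑ m ∈ s, f y * eblk a m y) := by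
    intro f hf s
    refine memLainf_of_dominated hf
      (Finset.measurable_sum s fun m _ => hf.1.mul (measurable_eblk m)) fun y => ?_
    rw [← Finset.mul_sum, sum_eblk, norm_mul]
    refine mul_le_of_le_one_right (norm_nonneg _) ?_
    split <;> simp
  have hRemMem : ∀ f, MemLainf a f → ∀ s : Finset ℤ,
      MemLainf a (fun y => f y * (1 - ∑ m ∈ s, eblk a m y)) := by
    intro f hf s
    refine memLainf_of_dominated hf
      (hf.1.mul (measurable_const.sub (Finset.measurable_sum s fun m _ => measurable_eblk m)))
      fun y => ?_
    rw [norm_mul]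
    exact mul_le_of_le_one_right (norm_nonneg _) (norm_one_sub_sum_eblk s y)
  have hShiftEB : ∀ f, MemLainf a f → ∀ m : ℤ, EssBdd a (fun x => f (x + (m : ℝ) * a)) := by
    intro f hf m
    obtain ⟨hfm, Cf, hCf⟩ := hf
    refine ⟨hfm.comp (measurable_id.add_const _), Real.sqrt Cf, ?_⟩
    filter_upwards [hCf] with x hx
    have h1 := hx {-m}
    rw [Finset.sum_singleton] at h1
    have harg : x - ((-m : ℤ) : ℝ) * a = x + (m : ℝ) * a := by push_cast; ring
    rw [harg] at h1
    calc ‖f (x + (m : ℝ) * a)‖ = Real.sqrt (‖f (x + (m : ℝ) * a)‖ ^ 2) :=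
          (Real.sqrt_sq (norm_nonneg _)).symm
      _ ≤ Real.sqrt Cf := Real.sqrt_le_sqrt h1
  -- Φ(f · e_m) = f(·+ma) Φ(e_m)
  have hstep : ∀ f, MemLainf a f → ∀ m : ℤ,
      Φ (fun y => f y * eblk a m y) =ᵐ[μres a]
        fun x => f (x + (m : ℝ) * a) * φ m x := by
    intro f hf m
    have hpt : (fun y => f y * eblk a m y)
        = fun y => per a (fun x => f (x + (m : ℝ) * a)) y * eblk a m y := by
      funext y
      by_cases hy : ⌊y / a⌋ = m
      · have h1 : per a (fun x => f (x + (m : ℝ) * a)) y = f y := by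
          unfold per
          rw [hy]
          congr 1
          ring
        rw [h1]
      · have h2 : eblk a m y = 0 := if_neg hy
        rw [h2, mul_zero, mul_zero]
    rw [hpt]
    exact hΦ3 _ (hShiftEB f hf m) _ (memLainf_eblk ha m)
  -- additivity over finsets
  have hD1 : ∀ f, MemLainf a f → ∀ s : Finset ℤ,
      Φ (fun y => ∑ m ∈ s, f y * eblk a m y) =ᵐ[μres a]
        fun x => ∑ m ∈ s, f (x + (m : ℝ) * a) * φ m x := by
    intro f hf s
    induction s using Finset.induction_on with
    | empty =>
      simp only [Finset.sum_empty]
      exact hΦ0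
    | insert c s hc ih =>
      have hsplit : (fun y => ∑ m ∈ insert c s, f y * eblk a m y)
          = (fun y => f y * eblk a c y) + fun y => ∑ m ∈ s, f y * eblk a m y := by
        funext y
        rw [Finset.sum_insert hc]
        rfl
      rw [hsplit]
      have h1 := hΦ2 _ _ (hMulMem f hf c) (hPartMem f hf s)
      filter_upwards [h1, hstep f hf c, ih] with x hx h2 h3
      rw [hx]
      simp only [Pi.add_apply]
      rw [h2, h3, Finset.sum_insert hc]
  -- decomposition
  have hD2 : ∀ f, MemLainf a f → ∀ s : Finset ℤ,
      Φ f =ᵐ[μres a]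
        fun x => Φ (fun y => f y * (1 - ∑ m ∈ s, eblk a m y)) x
          + ∑ m ∈ s, f (x + (m : ℝ) * a) * φ m x := by
    intro f hf s
    have hfeq : f = (fun y => f y * (1 - ∑ m ∈ s, eblk a m y))
        + fun y => ∑ m ∈ s, f y * eblk a m y := by
      funext y
      simp only [Pi.add_apply, ← Finset.mul_sum]
      ring
    have h1 := hΦ2 _ _ (hRemMem f hf s) (hPartMem f hf s)
    rw [← hfeq] at h1
    filter_upwards [h1, hD1 f hf s] with x hx h2
    rw [hx]
    simp only [Pi.add_apply]
    rw [h2]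
  -- uniform bound on the `φ m`
  have hφbd : ∀ᵐ x ∂(μres a), ∀ s : Finset ℤ, ∑ m ∈ s, ‖φ m x‖ ^ 2 ≤ C₀ ^ 2 := by
    rw [ae_all_iff]
    intro s
    set F : ℤ → ℝ → ℂ :=
      fun m => if m ∈ s then (fun y => (starRingEnd ℂ) (φ m y)) else 0 with hFdef
    have hF0 : ∀ m, m ∉ s → ∀ y, F m y = 0 := by
      intro m hm y
      simp only [hFdef, if_neg hm, Pi.zero_apply]
    have hFs : ∀ m, m ∈ s → ∀ y, F m y = (starRingEnd ℂ) (φ m y) := by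
      intro m hm y
      simp only [hFdef, if_pos hm]
    have hFm : ∀ m, Measurable (F m) := by
      intro m
      by_cases hm : m ∈ s
      · simp only [hFdef, if_pos hm]
        exact Complex.continuous_conj.measurable.comp (hφm m)
      · simp only [hFdef, if_neg hm]
        exact measurable_const
    have hFnorm : ∀ m y, ‖F m y‖ = if m ∈ s then ‖φ m y‖ else 0 := by
      intro m y
      by_cases hm : m ∈ s
      · rw [hFs m hm, if_pos hm]
        exact RCLike.norm_conj _
      · rw [hF0 m hm, if_neg hm, norm_zero]
    have hFb : ∃ B : ℝ, ∀ᵐ x ∂(μres a), ∀ t : Finset ℤ, ∑ m ∈ t, ‖F m x‖ ^ 2 ≤ B := by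
      set K : ℤ → ℝ := fun m => Classical.choose (hφEB m).2 with hKdef
      have hK : ∀ m, ∀ᵐ x ∂(μres a), ‖φ m x‖ ≤ K m :=
        fun m => Classical.choose_spec (hφEB m).2
      refine ⟨∑ m ∈ s, (K m) ^ 2, ?_⟩
      filter_upwards [ae_all_iff.mpr hK] with x hx t
      refine le_trans (sum_le_of_support s t (fun m => by positivity) ?_) ?_
      · intro m hm
        rw [hFnorm, if_neg hm]
        norm_num
      · refine Finset.sum_le_sum fun m hm => ?_
        rw [hFnorm, if_pos hm]
        exact pow_le_pow_left₀ (norm_nonneg _) (hx m) 2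
    obtain ⟨hwMem, hwTr⟩ := part3' ha F hFm hFb
    have hwTrAll : ∀ᵐ x ∂(μres a), ∀ m : ℤ, glue a F (x + (m : ℝ) * a) = F m x :=
      ae_all_iff.mpr hwTr
    have hrw0 : (fun y => glue a F y * (1 - ∑ m ∈ s, eblk a m y)) = (0 : ℝ → ℂ) := by
      funext y
      by_cases hy : ⌊y / a⌋ ∈ s
      · simp only [sum_eblk, if_pos hy, sub_self, mul_zero, Pi.zero_apply]
      · have : glue a F y = 0 := by
          unfold glue
          rw [hF0 _ hy]
        rw [this, zero_mul]
        rfl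
    have hw1 := hD2 _ hwMem s
    rw [hrw0] at hw1
    -- a.e.: Φ w x = ∑_{m∈s} ‖φ m x‖² (as a complex number)
    have hval : ∀ᵐ x ∂(μres a),
        Φ (glue a F) x = ((∑ m ∈ s, ‖φ m x‖ ^ 2 : ℝ) : ℂ) := by
      filter_upwards [hw1, hΦ0, hwTrAll] with x h1 h2 h3
      rw [h1, h2]
      simp only [Pi.zero_apply, zero_add]
      rw [Complex.ofReal_sum]
      refine Finset.sum_congr rfl fun m hm => ?_
      rw [h3 m, hFs m hm, mul_comm, Complex.mul_conj, Complex.normSq_eq_norm_sq]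
    set L := LainfBound a (glue a F) with hLdef
    have hLbd : InBd a (glue a F) (C₀ * Real.sqrt L) := by
      filter_upwards [ae_Ico ha, hC₀ _ hwMem, hval] with x hIco hb heq t
      have hkey : ∀ n : ℤ, glue a F (x - (n : ℝ) * a) = F (-n) x := by
        intro n
        have harg : x - (n : ℝ) * a = x + ((-n : ℤ) : ℝ) * a := by push_cast; ring
        rw [harg, glue_shift ha hIco]
      calc ∑ n ∈ t, ‖glue a F (x - (n : ℝ) * a)‖ ^ 2
          = ∑ n ∈ t, ‖F (-n) x‖ ^ 2 := Finset.sum_congr rfl fun n _ => by rw [hkey]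
        _ = ∑ m ∈ t.image (fun n : ℤ => -n), ‖F m x‖ ^ 2 := by
            rw [Finset.sum_image (fun x _ y _ h => neg_injective h)]
        _ ≤ ∑ m ∈ s, ‖F m x‖ ^ 2 := by
            refine sum_le_of_support s _ (fun m => by positivity) fun m hm => ?_
            rw [hFnorm, if_neg hm]
            norm_num
        _ = ∑ m ∈ s, ‖φ m x‖ ^ 2 := by
            refine Finset.sum_congr rfl fun m hm => ?_
            rw [hFnorm, if_pos hm]
        _ = ‖Φ (glue a F) x‖ := by
            rw [heq, Complex.norm_real,
              Real.norm_of_nonneg (Finset.sum_nonneg fun m _ => by positivity)]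
        _ ≤ C₀ * Real.sqrt L := hb
    have hL1 : L ≤ C₀ * Real.sqrt L := LB_le ha hLbd
    have hL0 : 0 ≤ L := LB_nonneg ha hwMem.2
    have hsqrtL : Real.sqrt L ≤ C₀ := by
      rcases eq_or_lt_of_le (Real.sqrt_nonneg L) with h | h
      · rw [← h]; exact hC₀nn
      · have h2 : Real.sqrt L * Real.sqrt L ≤ C₀ * Real.sqrt L := by
          rw [Real.mul_self_sqrt hL0]
          exact hL1
        exact le_of_mul_le_mul_right h2 h
    filter_upwards [hval, hC₀ _ hwMem] with x h1 h2
    have h3 : ∑ m ∈ s, ‖φ m x‖ ^ 2 = ‖Φ (glue a F) x‖ := by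
      rw [h1, Complex.norm_real,
        Real.norm_of_nonneg (Finset.sum_nonneg fun m _ => by positivity)]
    rw [h3]
    calc ‖Φ (glue a F) x‖ ≤ C₀ * Real.sqrt L := h2
      _ ≤ C₀ * C₀ := mul_le_mul_of_nonneg_left hsqrtL hC₀nn
      _ = C₀ ^ 2 := (sq C₀).symm
  -- construct g
  set G : ℤ → ℝ → ℂ := fun m => fun y => (starRingEnd ℂ) (φ m y) with hGdef
  have hGm : ∀ m, Measurable (G m) :=
    fun m => Complex.continuous_conj.measurable.comp (hφm m)
  have hGb : ∃ B : ℝ, ∀ᵐ x ∂(μres a), ∀ t : Finset ℤ, ∑ m ∈ t, ‖G m x‖ ^ 2 ≤ B := by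
    refine ⟨C₀ ^ 2, ?_⟩
    filter_upwards [hφbd] with x hx t
    have : ∑ m ∈ t, ‖G m x‖ ^ 2 = ∑ m ∈ t, ‖φ m x‖ ^ 2 :=
      Finset.sum_congr rfl fun m _ => by rw [hGdef]; simp [RCLike.norm_conj]
    rw [this]
    exact hx t
  obtain ⟨hgMem, hgTr⟩ := part3' ha G hGm hGb
  refine ⟨glue a G, hgMem, fun f hf => ?_⟩
  -- the final representation for a fixed f
  obtain ⟨hfm, Cf, hCf⟩ := hf
  set sN : ℕ → Finset ℤ := fun N => Finset.Icc (-(N : ℤ)) (N : ℤ) with hsNdef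
  have hsNmono : Monotone sN := by
    intro i j hij
    exact Finset.Icc_subset_Icc (by exact_mod_cast neg_le_neg (Int.ofNat_le.mpr hij))
      (by exact_mod_cast Int.ofNat_le.mpr hij)
  have hsNexh : ∀ n : ℤ, ∃ N : ℕ, n ∈ sN N := by
    intro n
    exact ⟨n.natAbs, by simp only [hsNdef, Finset.mem_Icc]; omega⟩
  set δ : ℕ → ℝ := fun k => 1 / ((k : ℝ) + 1) with hδdef
  have hδpos : ∀ k, 0 < δ k := fun k => by positivity
  set Sinf : ℝ → ℝ≥0∞ := fun x => ∑' m : ℤ, (‖f (x + (m : ℝ) * a)‖₊ : ℝ≥0∞) ^ 2 with hSinfdef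
  set SN : ℕ → ℝ → ℝ≥0∞ :=
    fun N x => ∑ m ∈ sN N, (‖f (x + (m : ℝ) * a)‖₊ : ℝ≥0∞) ^ 2 with hSNdef
  have hterm_meas : ∀ m : ℤ, Measurable fun x => (‖f (x + (m : ℝ) * a)‖₊ : ℝ≥0∞) ^ 2 :=
    fun m => ((hfm.comp (measurable_id.add_const _)).nnnorm.coe_nnreal_ennreal).pow_const 2
  have hSinfMeas : Measurable Sinf := Measurable.ennreal_tsum fun m => hterm_meas m
  have hSNMeas : ∀ N, Measurable (SN N) :=
    fun N => Finset.measurable_sum _ fun m _ => hterm_meas m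
  have hSNtop : ∀ N x, SN N x ≠ ⊤ := by
    intro N x
    rw [hSNdef]
    simp only [ne_eq, ← lt_top_iff_ne_top, ENNReal.sum_lt_top]
    intro m _
    exact ENNReal.pow_lt_top ENNReal.coe_lt_top
  set E : ℕ → ℕ → Set ℝ :=
    fun N k => {x | Sinf x ≤ SN N x + ENNReal.ofReal (δ k)} with hEdef
  have hEMeas : ∀ N k, MeasurableSet (E N k) :=
    fun N k => measurableSet_le hSinfMeas ((hSNMeas N).add measurable_const)
  set χ : ℕ → ℕ → ℝ → ℂ := fun N k x => if x ∈ E N k then 1 else 0 with hχdef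
  have hχEB : ∀ N k, EssBdd a (χ N k) := by
    intro N k
    refine ⟨Measurable.ite (hEMeas N k) measurable_const measurable_const, 1,
      Filter.Eventually.of_forall fun x => ?_⟩
    simp only [hχdef]
    split <;> simp
  -- remainder terms
  set rN : ℕ → ℝ → ℂ := fun N y => f y * (1 - ∑ m ∈ sN N, eblk a m y) with hrNdef
  have hrNMem : ∀ N, MemLainf a (rN N) := fun N => hRemMem f ⟨hfm, Cf, hCf⟩ (sN N)
  have hprodMem : ∀ N k, MemLainf a (fun y => per a (χ N k) y * rN N y) := by
    intro N k
    refine memLainf_of_dominated (hrNMem N)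
      ((measurable_per (hχEB N k).1).mul (hrNMem N).1) fun y => ?_
    rw [norm_mul]
    refine mul_le_of_le_one_left (norm_nonneg _) ?_
    unfold per
    simp only [hχdef]
    split <;> simp
  -- bound on the localized remainder
  have hLB : ∀ N k, LainfBound a (fun y => per a (χ N k) y * rN N y) ≤ δ k := by
    intro N k
    refine LB_le ha ?_
    filter_upwards [ae_Ico ha] with x hIco t
    have hper : ∀ n : ℤ, per a (χ N k) (x - (n : ℝ) * a) = χ N k x :=
      fun n => per_shift' ha hIco _ n
    by_cases hxE : x ∈ E N k
    · -- terms are tail terms of the ℓ² sum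
      have hterm : ∀ n : ℤ, ‖per a (χ N k) (x - (n : ℝ) * a) * rN N (x - (n : ℝ) * a)‖ ^ 2
          = if -n ∉ sN N then ‖f (x - (n : ℝ) * a)‖ ^ 2 else 0 := by
        intro n
        rw [hper n]
        simp only [hχdef, if_pos hxE, one_mul]
        rw [hrNdef]
        simp only
        rw [sum_eblk, floor_shift' ha hIco]
        by_cases hn : -n ∈ sN N
        · rw [if_pos hn, if_neg (by simpa using hn)]
          simp
        · rw [if_neg hn, if_pos hn]
          simp
      set u : Finset ℤ := (t.filter fun n => -n ∉ sN N).image (fun n => -n) with hudef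
      have hdisj : Disjoint u (sN N) := by
        rw [Finset.disjoint_left]
        intro m hm
        rw [hudef, Finset.mem_image] at hm
        obtain ⟨n, hn, rfl⟩ := hm
        exact (Finset.mem_filter.mp hn).2
      have hsum_eq : ∑ n ∈ t, ‖per a (χ N k) (x - (n : ℝ) * a) * rN N (x - (n : ℝ) * a)‖ ^ 2
          = ∑ m ∈ u, ‖f (x + (m : ℝ) * a)‖ ^ 2 := by
        rw [hudef, Finset.sum_image (fun x _ y _ h => neg_injective h)]
        rw [Finset.sum_filter]
        refine Finset.sum_congr rfl fun n hn => ?_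
        rw [hterm n]
        by_cases hmem : -n ∈ sN N
        · rw [if_neg (by simpa using hmem), if_neg (by simpa using hmem)]
        · rw [if_pos hmem, if_pos hmem]
          congr 2
          push_cast
          ring
      rw [hsum_eq]
      -- ENNReal estimate
      have hEN : ∑ m ∈ u, (‖f (x + (m : ℝ) * a)‖₊ : ℝ≥0∞) ^ 2 ≤ ENNReal.ofReal (δ k) := by
        have h1 : (∑ m ∈ u, (‖f (x + (m : ℝ) * a)‖₊ : ℝ≥0∞) ^ 2) + SN N x
            = ∑ m ∈ u ∪ sN N, (‖f (x + (m : ℝ) * a)‖₊ : ℝ≥0∞) ^ 2 := by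
          rw [hSNdef]
          exact (Finset.sum_union hdisj).symm
        have h2 : ∑ m ∈ u ∪ sN N, (‖f (x + (m : ℝ) * a)‖₊ : ℝ≥0∞) ^ 2 ≤ Sinf x :=
          ENNReal.sum_le_tsum _
        have h3 : (∑ m ∈ u, (‖f (x + (m : ℝ) * a)‖₊ : ℝ≥0∞) ^ 2) + SN N x
            ≤ ENNReal.ofReal (δ k) + SN N x := by
          rw [h1]
          refine h2.trans ?_
          rw [add_comm]
          exact hxE
        exact (ENNReal.add_le_add_iff_right (hSNtop N x)).mp h3
      rw [← ENNReal.ofReal_le_ofReal_iff (hδpos k).le, ofReal_sum_sq]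
      exact hEN
    · -- χ = 0, all terms vanish
      have : ∀ n ∈ t, ‖per a (χ N k) (x - (n : ℝ) * a) * rN N (x - (n : ℝ) * a)‖ ^ 2 = 0 := by
        intro n _
        rw [hper n]
        simp [hχdef, if_neg hxE]
      rw [Finset.sum_congr rfl this]
      simp [(hδpos k).le]
  -- gather the a.e. facts
  have hgAll : ∀ᵐ x ∂(μres a), ∀ m : ℤ, glue a G (x + (m : ℝ) * a) = G m x :=
    ae_all_iff.mpr hgTr
  have hDecAll : ∀ᵐ x ∂(μres a), ∀ N : ℕ,
      Φ f x = Φ (fun y => f y * (1 - ∑ m ∈ sN N, eblk a m y)) x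
        + ∑ m ∈ sN N, f (x + (m : ℝ) * a) * φ m x :=
    ae_all_iff.mpr fun N => hD2 f ⟨hfm, Cf, hCf⟩ (sN N)
  have hLocAll : ∀ᵐ x ∂(μres a), ∀ N k : ℕ,
      Φ (fun y => per a (χ N k) y * rN N y) x = χ N k x * Φ (rN N) x :=
    ae_all_iff.mpr fun N => ae_all_iff.mpr fun k =>
      hΦ3 (χ N k) (hχEB N k) (rN N) (hrNMem N)
  have hLocBdAll : ∀ᵐ x ∂(μres a), ∀ N k : ℕ,
      ‖Φ (fun y => per a (χ N k) y * rN N y) x‖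
        ≤ C₀ * Real.sqrt (LainfBound a (fun y => per a (χ N k) y * rN N y)) :=
    ae_all_iff.mpr fun N => ae_all_iff.mpr fun k => hC₀ _ (hprodMem N k)
  filter_upwards [ae_Ico ha, hCf, hgAll, hφbd, hDecAll, hLocAll, hLocBdAll]
    with x hIco hCfx hgx hφbx hDecx hLocx hLocBdx
  -- summability at the point x
  have h_f_sq_bdd : ∀ u : Finset ℤ, ∑ m ∈ u, ‖f (x + (m : ℝ) * a)‖ ^ 2 ≤ Cf := by
    intro u
    have h1 : ∑ m ∈ u, ‖f (x + (m : ℝ) * a)‖ ^ 2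
        = ∑ n ∈ u.image (fun m : ℤ => -m), ‖f (x - (n : ℝ) * a)‖ ^ 2 := by
      rw [Finset.sum_image (fun x _ y _ h => neg_injective h)]
      refine Finset.sum_congr rfl fun m _ => ?_
      congr 2
      push_cast
      ring
    rw [h1]
    exact hCfx _
  have hsummf : Summable fun m : ℤ => ‖f (x + (m : ℝ) * a)‖ ^ 2 :=
    summable_sq_of_bdd h_f_sq_bdd
  have hsummφ : Summable fun m : ℤ => ‖φ m x‖ ^ 2 :=
    summable_sq_of_bdd fun u => hφbx u
  have hsumm : Summable fun m : ℤ => f (x + (m : ℝ) * a) * φ m x :=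
    summable_mul_of_sq hsummf hsummφ
  set A : ℂ := ∑' m : ℤ, f (x + (m : ℝ) * a) * φ m x with hAdef
  have htendP : Tendsto (fun N => ∑ m ∈ sN N, f (x + (m : ℝ) * a) * φ m x)
      atTop (𝓝 A) :=
    hsumm.hasSum.comp (tendsto_atTop_finset_of_monotone hsNmono fun n => hsNexh n)
  -- finiteness of Sinf
  have hSfin : Sinf x ≠ ⊤ := by
    refine ne_top_of_le_ne_top (@ENNReal.ofReal_ne_top Cf) ?_
    rw [hSinfdef]
    simp only
    rw [ENNReal.tsum_eq_iSup_sum]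
    refine iSup_le fun u => ?_
    rw [← ofReal_sum_sq u (fun m => f (x + (m : ℝ) * a))]
    exact ENNReal.ofReal_le_ofReal (h_f_sq_bdd u)
  have hSNmono' : ∀ {N N' : ℕ}, N ≤ N' → SN N x ≤ SN N' x := by
    intro N N' h
    exact Finset.sum_le_sum_of_subset (hsNmono h)
  have hiSup : ⨆ N, SN N x = Sinf x := by
    refine le_antisymm (iSup_le fun N => ENNReal.sum_le_tsum _) ?_
    rw [hSinfdef]
    simp only
    rw [ENNReal.tsum_eq_iSup_sum]
    refine iSup_le fun u => ?_
    have hsub : u ⊆ sN (u.sup fun n => n.natAbs) := by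
      intro n hn
      have h : n.natAbs ≤ u.sup fun n : ℤ => n.natAbs := Finset.le_sup hn
      simp only [hsNdef, Finset.mem_Icc]
      omega
    exact le_trans (Finset.sum_le_sum_of_subset hsub) (le_iSup (fun N => SN N x) _)
  have hEmem : ∀ k : ℕ, ∃ N₀ : ℕ, ∀ N ≥ N₀, x ∈ E N k := by
    intro k
    by_cases hz : Sinf x = 0
    · exact ⟨0, fun N _ => by
        simp only [hEdef, Set.mem_setOf_eq, hz]
        exact zero_le⟩
    · have h1 : Sinf x - ENNReal.ofReal (δ k) < ⨆ N, SN N x := by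
        rw [hiSup]
        exact ENNReal.sub_lt_self hSfin hz (ENNReal.ofReal_pos.mpr (hδpos k)).ne'
      obtain ⟨N₀, hN₀⟩ := lt_iSup_iff.mp h1
      refine ⟨N₀, fun N hN => ?_⟩
      simp only [hEdef, Set.mem_setOf_eq]
      rw [← tsub_le_iff_right]
      exact le_trans hN₀.le (hSNmono' hN)
  -- eventual bound
  have hbd : ∀ k : ℕ, ∀ᶠ N in atTop,
      ‖Φ f x - ∑ m ∈ sN N, f (x + (m : ℝ) * a) * φ m x‖ ≤ C₀ * Real.sqrt (δ k) := by
    intro k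
    obtain ⟨N₀, hN₀⟩ := hEmem k
    filter_upwards [eventually_ge_atTop N₀] with N hN
    have hxE : x ∈ E N k := hN₀ N hN
    have h1 : Φ (fun y => per a (χ N k) y * rN N y) x = Φ (rN N) x := by
      rw [hLocx N k]
      simp only [hχdef, if_pos hxE, one_mul]
    have h2 : ‖Φ (rN N) x‖ ≤ C₀ * Real.sqrt (δ k) := by
      rw [← h1]
      refine (hLocBdx N k).trans ?_
      exact mul_le_mul_of_nonneg_left (Real.sqrt_le_sqrt (hLB N k)) hC₀nn
    have h3 : Φ f x - ∑ m ∈ sN N, f (x + (m : ℝ) * a) * φ m x = Φ (rN N) x := by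
      rw [hDecx N]
      rw [hrNdef]
      ring
    rw [h3]
    exact h2
  have hlim : ∀ k : ℕ, ‖Φ f x - A‖ ≤ C₀ * Real.sqrt (δ k) := by
    intro k
    exact le_of_tendsto ((tendsto_const_nhds.sub htendP).norm) (hbd k)
  have hδto : Tendsto (fun k : ℕ => C₀ * Real.sqrt (δ k)) atTop (𝓝 0) := by
    have h1 : Tendsto δ atTop (𝓝 0) := by
      rw [hδdef]
      exact tendsto_one_div_add_atTop_nhds_zero_nat
    have h2 : Tendsto (fun k => Real.sqrt (δ k)) atTop (𝓝 0) := by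
      have := (Real.continuous_sqrt.tendsto 0).comp h1
      rwa [Real.sqrt_zero] at this
    have := h2.const_mul C₀
    rwa [mul_zero] at this
  have hzero : ‖Φ f x - A‖ ≤ 0 := ge_of_tendsto hδto (Filter.Eventually.of_forall hlim)
  have hΦfA : Φ f x = A := sub_eq_zero.mp (norm_le_zero_iff.mp hzero)
  -- rewrite the tsum
  have hre := (Equiv.neg ℤ).tsum_eq (fun m : ℤ => f (x + (m : ℝ) * a) * φ m x)
  rw [hΦfA, hAdef, ← hre]
  refine tsum_congr fun n => ?_
  have harg : x - (n : ℝ) * a = x + (((Equiv.neg ℤ) n : ℤ) : ℝ) * a := by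
    simp only [Equiv.neg_apply]
    push_cast
    ring
  rw [harg, hgx ((Equiv.neg ℤ) n)]
  rw [hGdef]
  simp

/-- the map `U_a f = (T_{-na} f·χ_{[0,a]})_{n∈ℤ}` is a unitary of Hilbert
`L^∞[0,a]`-modules from `L_a^∞(ℓ²)` onto `ℓ²_{ℤ,strong}(L^∞[0,a])`: it preserves the
`L^∞[0,a]`-valued inner product `⟨f,g⟩(x) = ∑_{n∈ℤ} f(x−na)·conj(g(x−na))` and is bijective
(up to a.e. equality). Consequently `L_a^∞(ℓ²)` is a self-dual Hilbert C*-module over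
`L^∞[0,a]`. -/
theorem stmt_18 (a : ℝ) (ha : 0 < a) :
    -- `U_a` preserves the inner product: `⟨U_a f, U_a g⟩ = ⟨f, g⟩`
    (∀ f g : ℝ → ℂ, MemLainf a f → MemLainf a g → ∀ x : ℝ,
      (∑' n : ℤ, (fun y => f (y + (n : ℝ) * a)) x *
          (starRingEnd ℂ) ((fun y => g (y + (n : ℝ) * a)) x))
        = ∑' n : ℤ, f (x - (n : ℝ) * a) * (starRingEnd ℂ) (g (x - (n : ℝ) * a)))
    ∧
    -- `U_a` is injective (up to a.e. equality)
    (∀ f g : ℝ → ℂ, MemLainf a f → MemLainf a g →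
      (∀ n : ℤ, (fun x => f (x + (n : ℝ) * a)) =ᵐ[μres a] fun x => g (x + (n : ℝ) * a)) →
      f =ᵐ[volume] g)
    ∧
    -- `U_a` is surjective onto `ℓ²_{ℤ,strong}(L^∞[0,a])`
    (∀ F : ℤ → ℝ → ℂ, (∀ n, Measurable (F n)) →
      (∃ C : ℝ, ∀ᵐ x ∂(μres a), ∀ s : Finset ℤ, ∑ n ∈ s, ‖F n x‖ ^ 2 ≤ C) →
      ∃ f : ℝ → ℂ, MemLainf a f ∧
        ∀ n : ℤ, (fun x => f (x + (n : ℝ) * a)) =ᵐ[μres a] F n)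
    ∧
    -- consequently `L_a^∞(ℓ²)` is self-dual: every bounded `L^∞[0,a]`-module map
    -- `Φ : L_a^∞(ℓ²) → L^∞[0,a]` is represented by the inner product against some
    -- `g ∈ L_a^∞(ℓ²)`
    (∀ Φ : (ℝ → ℂ) → (ℝ → ℂ),
      (∀ f, MemLainf a f → EssBdd a (Φ f)) →
      (∀ f g, MemLainf a f → MemLainf a g → Φ (f + g) =ᵐ[μres a] Φ f + Φ g) →
      (∀ h, EssBdd a h → ∀ f, MemLainf a f →
        Φ (fun x => per a h x * f x) =ᵐ[μres a] fun x => h x * Φ f x) →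
      (∃ C : ℝ, ∀ f, MemLainf a f →
        ∀ᵐ x ∂(μres a), ‖Φ f x‖ ≤ C * Real.sqrt (LainfBound a f)) →
      ∃ g : ℝ → ℂ, MemLainf a g ∧
        ∀ f, MemLainf a f →
          Φ f =ᵐ[μres a]
            fun x => ∑' n : ℤ, f (x - (n : ℝ) * a) *
              (starRingEnd ℂ) (g (x - (n : ℝ) * a))) := by
  exact ⟨fun f g _ _ x => part1 f g x,
    fun f g _ _ h => part2 ha f g h,
    fun F hFm hFb => part3 ha F hFm hFb,
    fun Φ h1 h2 h3 h4 => part4 ha Φ h1 h2 h3 h4⟩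

end Aux
end
end
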